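/- arXiv:2404.02021 — 6 statements merged into one kernel-verified Lean document; each statement's English description precedes it below -/
import Mathlib

section
/- For every 3-graph H and every integer n ≥ 1, r(H, K_{n,n,n}^(3)) ≤ r(H, K_{1,n,n}^(3))^{3n}. -/
/-- A 3-uniform hypergraph on a finite subset of `ℕ`. -/
structure ThreeGraph where
  verts : Finset ℕ
  edges : Finset (Finset ℕ)
  card_eq : ∀ e ∈ edges, e.card = 3
  subset_verts : ∀ e ∈ edges, e ⊆ verts

/-- `χ` (on 3-element subsets of `{0, …, N-1}`) contains a copy of `H` in color `c`
(`true` = red, `false` = blue). -/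
def hasMonoCopy (N : ℕ) (χ : Finset ℕ → Bool) (H : ThreeGraph) (c : Bool) : Prop :=
  ∃ φ : ℕ → ℕ, Set.InjOn φ ↑H.verts ∧ (∀ v ∈ H.verts, φ v < N) ∧
    ∀ e ∈ H.edges, χ (e.image φ) = c

/-- The Ramsey number `r(G, H)`: the least `N` such that every red/blue coloring of the
triples of an `N`-element set contains a red copy of `G` or a blue copy of `H`. -/
noncomputable def ramsey (G H : ThreeGraph) : ℕ :=
  sInf {N : ℕ | ∀ χ : Finset ℕ → Bool,
    hasMonoCopy N χ G true ∨ hasMonoCopy N χ H false}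

/-- The complete tripartite 3-graph `K_{a,b,c}^{(3)}`. -/
def tripartite (a b c : ℕ) : ThreeGraph where
  verts := Finset.range (a + b + c)
  edges := ((Finset.range (a + b + c)).powersetCard 3).filter (fun e =>
    (e.filter (fun x => x < a)).card = 1 ∧
    (e.filter (fun x => a ≤ x ∧ x < a + b)).card = 1 ∧
    (e.filter (fun x => a + b ≤ x)).card = 1)
  card_eq := fun e he => (Finset.mem_powersetCard.mp (Finset.mem_filter.mp he).1).2
  subset_verts := fun e he => (Finset.mem_powersetCard.mp (Finset.mem_filter.mp he).1).1

/-- The complete 3-graph `K_n^{(3)}`. -/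
def completeTG (n : ℕ) : ThreeGraph where
  verts := Finset.range n
  edges := (Finset.range n).powersetCard 3
  card_eq := fun e he => (Finset.mem_powersetCard.mp he).2
  subset_verts := fun e he => (Finset.mem_powersetCard.mp he).1

/-- The shadow of a set of 3-edges: all 2-element subsets of its edges. -/
def shadowOf (E : Finset (Finset ℕ)) : Finset (Finset ℕ) :=
  E.biUnion (fun e => e.powersetCard 2)

/-- An oriented 3-graph (given by its edge set of ordered triples): it contains at most one of
the six coordinate permutations of any ordered triple and no triple with a repeated
coordinate. -/
def Oriented (E : Set (ℕ × ℕ × ℕ)) : Prop :=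
  ∀ a b c : ℕ, (a, b, c) ∈ E →
    (a ≠ b ∧ b ≠ c ∧ a ≠ c) ∧
    (a, c, b) ∉ E ∧ (b, a, c) ∉ E ∧ (b, c, a) ∉ E ∧ (c, a, b) ∉ E ∧ (c, b, a) ∉ E

/-- `f` is a pair homomorphism from `H`, ordered by the (injective on `V(H)`) function `ord`,
to the oriented 3-graph with edge set `E`. -/
def IsPairHom (H : ThreeGraph) (ord : ℕ → ℕ) (E : Set (ℕ × ℕ × ℕ))
    (f : Finset ℕ → ℕ) : Prop :=
  Set.InjOn ord ↑H.verts ∧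
  ∀ e ∈ H.edges, ∀ u v w : ℕ, e = {u, v, w} → ord u < ord v → ord v < ord w →
    (f {u, v} ≠ f {v, w} ∧ f {v, w} ≠ f {u, w} ∧ f {u, v} ≠ f {u, w}) ∧
    (f {u, v}, f {v, w}, f {u, w}) ∈ E

/-- `v(f(H'))` for the subhypergraph with edge set `E'`: the number of vertices of the image,
i.e. the size of the image of the shadow of `E'` under `f`. -/
def imageVerts (f : Finset ℕ → ℕ) (E' : Finset (Finset ℕ)) : ℕ :=
  ((shadowOf E').image f).card

/-- `e(f(H'))` for the subhypergraph with edge set `E'`: the number of distinct image triples. -/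
noncomputable def imageEdges (ord : ℕ → ℕ) (f : Finset ℕ → ℕ)
    (E' : Finset (Finset ℕ)) : ℕ :=
  Set.ncard {p : ℕ × ℕ × ℕ | ∃ e ∈ E', ∃ u v w : ℕ,
    e = ({u, v, w} : Finset ℕ) ∧ ord u < ord v ∧ ord v < ord w ∧
    p = (f {u, v}, f {v, w}, f {u, w})}

/-- The pair density `m_pair(H)`: the minimum, over all orderings of `V(H)` and all pair
homomorphisms `f` from `H` to any oriented 3-graph, of the maximum over all nonempty
subhypergraphs `H' ⊆ H` of `e(f(H')) / v(f(H'))`. -/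
noncomputable def mpair (H : ThreeGraph) : ℝ :=
  sInf {q : ℝ | ∃ (ord : ℕ → ℕ) (E : Set (ℕ × ℕ × ℕ)) (f : Finset ℕ → ℕ),
    Oriented E ∧ IsPairHom H ord E f ∧
    q = sSup {r : ℝ | ∃ E' : Finset (Finset ℕ), E' ⊆ H.edges ∧ E'.Nonempty ∧
      r = (imageEdges ord f E' : ℝ) / (imageVerts f E' : ℝ)}}

/-- The set of 3-edges `E` contains a Berge cycle: `t ≥ 2` distinct vertices and `t` distinct
edges with `v i, v (i+1) ∈ e i` cyclically. -/
def HasBergeCycle (E : Set (Finset ℕ)) : Prop :=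
  ∃ t : ℕ, 2 ≤ t ∧ ∃ (v : ZMod t → ℕ) (e : ZMod t → Finset ℕ),
    Function.Injective v ∧ Function.Injective e ∧
    ∀ i : ZMod t, e i ∈ E ∧ v i ∈ e i ∧ v (i + 1) ∈ e i

/-- `H` is avoidable: for every ordering and every pair homomorphism `f` from `H` to an
oriented 3-graph, the 3-graph of underlying vertex sets of the image edges has a Berge cycle. -/
def Avoidable (H : ThreeGraph) : Prop :=
  ∀ (ord : ℕ → ℕ) (E : Set (ℕ × ℕ × ℕ)) (f : Finset ℕ → ℕ),
    Oriented E → IsPairHom H ord E f →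
    HasBergeCycle {s : Finset ℕ | ∃ e ∈ H.edges, ∃ u v w : ℕ,
      e = ({u, v, w} : Finset ℕ) ∧ ord u < ord v ∧ ord v < ord w ∧
      s = ({f {u, v}, f {v, w}, f {u, w}} : Finset ℕ)}

/-- A linear 3-graph: any two distinct edges share at most one vertex. -/
def LinearTG (F : ThreeGraph) : Prop :=
  ∀ e₁ ∈ F.edges, ∀ e₂ ∈ F.edges, e₁ ≠ e₂ → (e₁ ∩ e₂).card ≤ 1

/-!
Let `m = r(H, K_{1,n,n})`, `N = m ^ (3n)`, and take a colouring of the triples of `[N]` with no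
red `H`. Every `m`-subset of `[N]` then contains a blue `K_{1,n,n}`, and the `2n+1` vertices of
such a copy lie in only `C(N-2n-1, m-2n-1)` of the `m`-subsets, so double counting yields at least
`C(N, 2n+1) / C(m, 2n+1)` vertex sets of blue copies of `K_{1,n,n}`. Without a blue `K_{n,n,n}`,
every pair of disjoint `n`-sets `B, C` has fewer than `n` common blue apexes, which bounds the
number of these copies by `(n-1) C(N,n)^2`; for `N = m ^ (3n)` this is too few.
-/

open Finset

/-- The arrow relation `N → (G, H)`. -/
def Arrows (N : ℕ) (G H : ThreeGraph) : Prop :=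
  ∀ χ : Finset ℕ → Bool, hasMonoCopy N χ G true ∨ hasMonoCopy N χ H false

lemma Arrows.ramsey_le {N : ℕ} {G H : ThreeGraph} (h : Arrows N G H) : ramsey G H ≤ N :=
  Nat.sInf_le h

lemma arrows_ramsey {G H : ThreeGraph} (h : ∃ N, Arrows N G H) : Arrows (ramsey G H) G H :=
  Nat.sInf_mem h

lemma ramsey_eq_zero {G H : ThreeGraph} (h : ∀ N, ¬ Arrows N G H) : ramsey G H = 0 :=
  Nat.sInf_eq_zero.2 (.inr (Set.eq_empty_of_forall_notMem h))

def HasMonoCopyIn (S : Finset ℕ) (χ : Finset ℕ → Bool) (H : ThreeGraph) (c : Bool) : Prop :=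
  ∃ φ : ℕ → ℕ, Set.InjOn φ H.verts ∧ Set.MapsTo φ H.verts S ∧ ∀ e ∈ H.edges, χ (e.image φ) = c

lemma hasMonoCopyIn_range {N : ℕ} {χ : Finset ℕ → Bool} {H : ThreeGraph} {c : Bool} :
    HasMonoCopyIn (range N) χ H c ↔ hasMonoCopy N χ H c := by
  simp [HasMonoCopyIn, hasMonoCopy, Set.MapsTo]

lemma HasMonoCopyIn.mono {S T : Finset ℕ} {χ : Finset ℕ → Bool} {H : ThreeGraph} {c : Bool}
    (h : HasMonoCopyIn S χ H c) (hST : S ⊆ T) : HasMonoCopyIn T χ H c :=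
  let ⟨φ, hinj, hmaps, hcol⟩ := h
  ⟨φ, hinj, hmaps.mono_right (coe_subset.2 hST), hcol⟩

lemma HasMonoCopyIn.of_comp_image {S T : Finset ℕ} {χ : Finset ℕ → Bool} {H : ThreeGraph}
    {c : Bool} {g : ℕ → ℕ} (h : HasMonoCopyIn T (fun e => χ (e.image g)) H c)
    (hinj : Set.InjOn g T) (hmaps : Set.MapsTo g T S) : HasMonoCopyIn S χ H c := by
  obtain ⟨φ, hφinj, hφmaps, hφcol⟩ := h
  refine ⟨g ∘ φ, hinj.comp hφinj hφmaps, hmaps.comp hφmaps, fun e he => ?_⟩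
  rw [← image_image]
  exact hφcol e he

lemma Arrows.hasMonoCopyIn {m : ℕ} {G H : ThreeGraph} (h : Arrows m G H) (χ : Finset ℕ → Bool)
    {S : Finset ℕ} (hS : #S = m) : HasMonoCopyIn S χ G true ∨ HasMonoCopyIn S χ H false := by
  obtain ⟨g, hg⟩ := (range m).finite_toSet.exists_bijOn_of_encard_eq
    (t := (S : Set ℕ)) (by rw [Set.encard_coe_eq_coe_finsetCard,
      Set.encard_coe_eq_coe_finsetCard, card_range, hS])
  exact (h fun e => χ (e.image g)).imp
    (fun h => (hasMonoCopyIn_range.2 h).of_comp_image hg.injOn hg.mapsTo)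
    (fun h => (hasMonoCopyIn_range.2 h).of_comp_image hg.injOn hg.mapsTo)

lemma mem_tripartite_edges {a b c : ℕ} {e : Finset ℕ} :
    e ∈ (tripartite a b c).edges ↔ ∃ x y z, x < a ∧ a ≤ y ∧ y < a + b ∧ a + b ≤ z ∧
      z < a + b + c ∧ e = {x, y, z} := by
  simp only [tripartite, mem_filter, mem_powersetCard]
  constructor
  · rintro ⟨⟨he, -⟩, h₁, h₂, h₃⟩
    obtain ⟨x, hx⟩ := card_eq_one.1 h₁
    obtain ⟨y, hy⟩ := card_eq_one.1 h₂
    obtain ⟨z, hz⟩ := card_eq_one.1 h₃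
    have hxe := mem_filter.1 (hx ▸ mem_singleton_self x)
    have hye := mem_filter.1 (hy ▸ mem_singleton_self y)
    have hze := mem_filter.1 (hz ▸ mem_singleton_self z)
    refine ⟨x, y, z, hxe.2, hye.2.1, hye.2.2, hze.2, mem_range.1 (he hze.1), ?_⟩
    have hsplit : e = e.filter (· < a) ∪ e.filter (fun w => a ≤ w ∧ w < a + b) ∪
        e.filter (a + b ≤ ·) := by
      ext w
      simp only [mem_union, mem_filter]
      grind
    rw [hsplit, hx, hy, hz, insert_eq, insert_eq, union_assoc]
  · rintro ⟨x, y, z, hx, hy, hy', hz, hz', rfl⟩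
    refine ⟨⟨?_, card_eq_three.2 ⟨x, y, z, by omega, by omega, by omega, rfl⟩⟩, ?_, ?_, ?_⟩
    · simp only [insert_subset_iff, singleton_subset_iff, mem_range]
      omega
    all_goals
      rw [filter_insert, filter_insert, filter_singleton]
      split_ifs <;> first | omega | rfl

lemma exists_injOn_Ico_mapsTo {A B C : Finset ℕ} (hAB : Disjoint A B) (hAC : Disjoint A C)
    (hBC : Disjoint B C) :
    ∃ φ : ℕ → ℕ, Set.InjOn φ (Set.Ico 0 (#A + #B + #C)) ∧ Set.MapsTo φ (Set.Ico 0 #A) A ∧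
      Set.MapsTo φ (Set.Ico #A (#A + #B)) B ∧
      Set.MapsTo φ (Set.Ico (#A + #B) (#A + #B + #C)) C := by
  have enum (D : Finset ℕ) (o : ℕ) : ∃ f : ℕ → ℕ, Set.BijOn f (Set.Ico o (o + #D)) D :=
    (Set.finite_Ico _ _).exists_bijOn_of_encard_eq (by
      rw [← coe_Ico, Set.encard_coe_eq_coe_finsetCard, Nat.card_Ico, Nat.add_sub_cancel_left,
        Set.encard_coe_eq_coe_finsetCard])
  obtain ⟨f, hf⟩ := enum A 0
  obtain ⟨g, hg⟩ := enum B #A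
  obtain ⟨h, hh⟩ := enum C (#A + #B)
  let φ x := if x < #A then f x else if x < #A + #B then g x else h x
  have hφA : Set.BijOn φ (Set.Ico 0 #A) A := by
    refine (zero_add #A ▸ hf).congr fun x hx => ?_
    simp [φ, hx.2]
  have hφB : Set.BijOn φ (Set.Ico #A (#A + #B)) B :=
    hg.congr fun x hx => by simp [φ, hx.2, not_lt.2 hx.1]
  have hφC : Set.BijOn φ (Set.Ico (#A + #B) (#A + #B + #C)) C :=
    hh.congr fun x hx => by simp [φ, not_lt.2 hx.1, (Nat.le_add_right _ _).trans hx.1]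
  refine ⟨φ, ?_, hφA.mapsTo, hφB.mapsTo, hφC.mapsTo⟩
  rw [← Set.Ico_union_Ico_eq_Ico (Nat.zero_le _) (Nat.le_add_right (#A + #B) #C),
    ← Set.Ico_union_Ico_eq_Ico (Nat.zero_le _) (Nat.le_add_right #A #B)]
  refine (Set.injOn_union ?_).2 ⟨(Set.injOn_union ?_).2 ⟨hφA.injOn, hφB.injOn, ?_⟩, hφC.injOn, ?_⟩
  · refine Set.disjoint_left.2 fun x hx hx' => ?_
    simp only [Set.mem_union, Set.mem_Ico] at hx hx'
    omega
  · exact Set.Ico_disjoint_Ico_same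
  · exact fun x hx y hy hxy => disjoint_left.1 hAB (hφA.mapsTo hx) (hxy ▸ hφB.mapsTo hy)
  · rintro x (hx | hx) y hy hxy
    · exact disjoint_left.1 hAC (hφA.mapsTo hx) (hxy ▸ hφC.mapsTo hy)
    · exact disjoint_left.1 hBC (hφB.mapsTo hx) (hxy ▸ hφC.mapsTo hy)

lemma coe_tripartite_verts (a b c : ℕ) :
    ((tripartite a b c).verts : Set ℕ) = Set.Ico 0 (a + b + c) := by
  rw [← coe_Ico, Nat.Ico_zero_eq_range]
  rfl

lemma hasMonoCopyIn_tripartite_iff {S : Finset ℕ} {χ : Finset ℕ → Bool} {a b c : ℕ}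
    {col : Bool} :
    HasMonoCopyIn S χ (tripartite a b c) col ↔
      ∃ A B C : Finset ℕ, A ⊆ S ∧ B ⊆ S ∧ C ⊆ S ∧ #A = a ∧ #B = b ∧ #C = c ∧
        Disjoint A B ∧ Disjoint A C ∧ Disjoint B C ∧
        ∀ x ∈ A, ∀ y ∈ B, ∀ z ∈ C, χ {x, y, z} = col := by
  have image_triple (φ : ℕ → ℕ) (x y z : ℕ) :
      ({x, y, z} : Finset ℕ).image φ = {φ x, φ y, φ z} := by
    simp only [image_insert, image_singleton]
  rw [HasMonoCopyIn, coe_tripartite_verts]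
  constructor
  · rintro ⟨φ, hinj, hmaps, hcol⟩
    rw [← coe_Ico] at hinj hmaps
    have hsub {I : Finset ℕ} (hI : I ⊆ Ico 0 (a + b + c)) : I.image φ ⊆ S :=
      image_subset_iff.2 fun x hx => hmaps (hI hx)
    have hcard {I : Finset ℕ} (hI : I ⊆ Ico 0 (a + b + c)) : #(I.image φ) = #I :=
      card_image_of_injOn (hinj.mono (coe_subset.2 hI))
    have hdisj {I J : Finset ℕ} (hI : I ⊆ Ico 0 (a + b + c)) (hJ : J ⊆ Ico 0 (a + b + c))
        (hIJ : Disjoint I J) : Disjoint (I.image φ) (J.image φ) := by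
      rw [← disjoint_coe, coe_image, coe_image]
      exact (disjoint_coe.2 hIJ).image hinj (coe_subset.2 hI) (coe_subset.2 hJ)
    have h₁ : Ico 0 a ⊆ Ico 0 (a + b + c) := Ico_subset_Ico_right (by omega)
    have h₂ : Ico a (a + b) ⊆ Ico 0 (a + b + c) := Ico_subset_Ico (by omega) (by omega)
    have h₃ : Ico (a + b) (a + b + c) ⊆ Ico 0 (a + b + c) := Ico_subset_Ico_left (by omega)
    refine ⟨_, _, _, hsub h₁, hsub h₂, hsub h₃, by rw [hcard h₁, Nat.card_Ico, Nat.sub_zero],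
      by rw [hcard h₂, Nat.card_Ico, Nat.add_sub_cancel_left],
      by rw [hcard h₃, Nat.card_Ico, Nat.add_sub_cancel_left],
      hdisj h₁ h₂ (Ico_disjoint_Ico_consecutive _ _ _),
      hdisj h₁ h₃ ((Ico_disjoint_Ico_consecutive _ _ _).mono_right
        (Ico_subset_Ico_left (by omega))),
      hdisj h₂ h₃ (Ico_disjoint_Ico_consecutive _ _ _), ?_⟩
    simp only [forall_mem_image, mem_Ico]
    intro x hx y hy z hz
    rw [← image_triple]
    exact hcol _ (mem_tripartite_edges.2 ⟨x, y, z, hx.2, hy.1, hy.2, hz.1, hz.2, rfl⟩)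
  · rintro ⟨A, B, C, hA, hB, hC, rfl, rfl, rfl, hAB, hAC, hBC, hcol⟩
    obtain ⟨φ, hinj, hφA, hφB, hφC⟩ := exists_injOn_Ico_mapsTo hAB hAC hBC
    refine ⟨φ, hinj, ?_, fun e he => ?_⟩
    · rw [← Set.Ico_union_Ico_eq_Ico (Nat.zero_le _) (Nat.le_add_right (#A + #B) #C),
        ← Set.Ico_union_Ico_eq_Ico (Nat.zero_le _) (Nat.le_add_right #A #B)]
      exact ((hφA.mono_right (coe_subset.2 hA)).union (hφB.mono_right (coe_subset.2 hB))).union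
        (hφC.mono_right (coe_subset.2 hC))
    · obtain ⟨x, y, z, hx, hy, hy', hz, hz', rfl⟩ := mem_tripartite_edges.1 he
      rw [image_triple]
      exact hcol _ (hφA ⟨x.zero_le, hx⟩) _ (hφB ⟨hy, hy'⟩) _ (hφC ⟨hz, hz'⟩)

lemma HasMonoCopyIn.tripartite_one {S : Finset ℕ} {χ : Finset ℕ → Bool} {n : ℕ} {col : Bool}
    (hn : 1 ≤ n) (h : HasMonoCopyIn S χ (tripartite n n n) col) :
    HasMonoCopyIn S χ (tripartite 1 n n) col := by
  obtain ⟨A, B, C, hA, hB, hC, hAn, hBn, hCn, hAB, hAC, hBC, hcol⟩ :=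
    hasMonoCopyIn_tripartite_iff.1 h
  obtain ⟨a, ha⟩ := card_pos.1 (hAn ▸ hn)
  refine hasMonoCopyIn_tripartite_iff.2 ⟨{a}, B, C, singleton_subset_iff.2 (hA ha), hB, hC,
    card_singleton a, hBn, hCn, disjoint_singleton_left.2 (disjoint_left.1 hAB ha),
    disjoint_singleton_left.2 (disjoint_left.1 hAC ha), hBC, ?_⟩
  intro x hx
  rw [mem_singleton.1 hx]
  exact hcol a ha

lemma Arrows.tripartite_one {N n : ℕ} {H : ThreeGraph} (hn : 1 ≤ n)
    (h : Arrows N H (tripartite n n n)) : Arrows N H (tripartite 1 n n) := fun χ =>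
  (h χ).imp_right fun h => hasMonoCopyIn_range.1 ((hasMonoCopyIn_range.2 h).tripartite_one hn)

lemma card_filter_superset_le {α : Type*} [DecidableEq α] {U K : Finset α} (hK : K ⊆ U)
    (m : ℕ) : #((U.powersetCard m).filter (K ⊆ ·)) ≤ (#U - #K).choose (m - #K) := by
  calc #((U.powersetCard m).filter (K ⊆ ·)) ≤ #((U \ K).powersetCard (m - #K)) := by
        refine card_le_card_of_injOn (· \ K) (fun S hS => ?_) (fun S₁ hS₁ S₂ hS₂ h => ?_)
        · obtain ⟨hS, hKS⟩ := mem_filter.1 hS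
          obtain ⟨hSU, hSm⟩ := mem_powersetCard.1 hS
          exact mem_powersetCard.2 ⟨sdiff_subset_sdiff hSU le_rfl,
            by rw [card_sdiff_of_subset hKS, hSm]⟩
        · rw [← sdiff_union_of_subset (mem_filter.1 hS₁).2,
            show S₁ \ K = S₂ \ K from h, sdiff_union_of_subset (mem_filter.1 hS₂).2]
    _ = (#U - #K).choose (m - #K) := by rw [card_powersetCard, card_sdiff_of_subset hK]

lemma choose_le_card_mul_choose_of_covers {α : Type*} [DecidableEq α] {U : Finset α}
    {F : Finset (Finset α)} {k m : ℕ} (hF : F ⊆ U.powersetCard k) (hmU : m ≤ #U)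
    (hcover : ∀ S ∈ U.powersetCard m, ∃ K ∈ F, K ⊆ S) :
    (#U).choose k ≤ #F * m.choose k := by
  have hkm : k ≤ m := by
    obtain ⟨S, hS⟩ := powersetCard_nonempty.2 hmU
    obtain ⟨K, hK, hKS⟩ := hcover S hS
    rw [← (mem_powersetCard.1 (hF hK)).2, ← (mem_powersetCard.1 hS).2]
    exact card_le_card hKS
  have hcount : (#U).choose m ≤ #F * (#U - k).choose (m - k) := by
    calc (#U).choose m = #(U.powersetCard m) := (card_powersetCard _ _).symm
      _ ≤ #(F.biUnion fun K => (U.powersetCard m).filter (K ⊆ ·)) := by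
          refine card_le_card fun S hS => ?_
          obtain ⟨K, hK, hKS⟩ := hcover S hS
          exact mem_biUnion.2 ⟨K, hK, mem_filter.2 ⟨hS, hKS⟩⟩
      _ ≤ #F * (#U - k).choose (m - k) := by
          refine card_biUnion_le_card_mul _ _ _ fun K hK => ?_
          obtain ⟨hKU, hKk⟩ := mem_powersetCard.1 (hF hK)
          exact hKk ▸ card_filter_superset_le hKU m
  refine Nat.le_of_mul_le_mul_right ?_ (Nat.choose_pos (Nat.sub_le_sub_right hmU k))
  calc (#U).choose k * (#U - k).choose (m - k) = (#U).choose m * m.choose k :=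
        (Nat.choose_mul hkm).symm
    _ ≤ #F * (#U - k).choose (m - k) * m.choose k := Nat.mul_le_mul_right _ hcount
    _ = #F * m.choose k * (#U - k).choose (m - k) := by ring

lemma mul_pow_lt_sub_pow {n m : ℕ} (hn : 1 ≤ n) (hm : 2 * n + 1 ≤ m) :
    (n - 1) * (m ^ (3 * n)) ^ (2 * n) * m ^ (2 * n + 1) <
      (m ^ (3 * n) - 2 * n) ^ (2 * n + 1) := by
  set N := m ^ (3 * n) with hN_def
  set k := 2 * n + 1 with hk_def
  have hN : m ^ (n - 1) * m ^ k = N := by rw [hN_def, ← pow_add]; congr 1; omega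
  have hn_le : n ≤ m ^ (n - 1) := by
    have := Nat.lt_pow_self (n := n - 1) (a := m) (by omega)
    omega
  have hk_lt : 2 * n * k < m ^ k :=
    calc 2 * n * k < k * k := by gcongr; omega
      _ ≤ m ^ 2 := by rw [sq]; gcongr
      _ ≤ m ^ k := Nat.pow_le_pow_right (by omega) (by omega)
  have hnN : n * m ^ k ≤ N := hN ▸ Nat.mul_le_mul_right _ hn_le
  have h2n : 2 * n ≤ N :=
    calc 2 * n ≤ 2 * n * k := Nat.le_mul_of_pos_right _ (by omega)
      _ ≤ n * m ^ k := by nlinarith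
      _ ≤ N := hnN
  have bernoulli := pow_add_mul_le_add_pow (R := ℤ) (a := N) (b := -(2 * n : ℤ))
    (by positivity) (by omega) k
  rw [show k - 1 = 2 * n by omega] at bernoulli
  zify [hn, h2n] at hnN hk_lt ⊢
  calc ((n : ℤ) - 1) * (N : ℤ) ^ (2 * n) * (m : ℤ) ^ k
      = (N : ℤ) ^ (2 * n) * (((n : ℤ) - 1) * (m : ℤ) ^ k) := by ring
    _ < (N : ℤ) ^ (2 * n) * ((N : ℤ) - 2 * n * k) := by
        gcongr
        · exact pow_pos (by exact_mod_cast (pow_pos (by omega) _ : 0 < N)) _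
        · linarith
    _ = (N : ℤ) ^ k + k * (N : ℤ) ^ (2 * n) * -(2 * n : ℤ) := by ring
    _ ≤ ((N : ℤ) - 2 * n) ^ k := by simpa [sub_eq_add_neg] using bernoulli

lemma choose_mul_lt_choose {n m : ℕ} (hn : 1 ≤ n) (hm : 2 * n + 1 ≤ m) :
    (n - 1) * (m ^ (3 * n)).choose n ^ 2 * m.choose (2 * n + 1) <
      (m ^ (3 * n)).choose (2 * n + 1) := by
  set N := m ^ (3 * n)
  set k := 2 * n + 1 with hk_def
  have hNk : N + 1 - k = N - 2 * n := by omega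
  refine Nat.lt_of_mul_lt_mul_right (a := n.factorial ^ 2 * k.factorial) ?_
  calc (n - 1) * N.choose n ^ 2 * m.choose k * (n.factorial ^ 2 * k.factorial)
      = (n - 1) * N.descFactorial n ^ 2 * m.descFactorial k := by
        simp only [Nat.descFactorial_eq_factorial_mul_choose]; ring
    _ ≤ (n - 1) * (N ^ n) ^ 2 * m ^ k := by
        gcongr <;> exact Nat.descFactorial_le_pow _ _
    _ < (N - 2 * n) ^ k := by rw [← pow_mul, mul_comm n 2]; exact mul_pow_lt_sub_pow hn hm
    _ ≤ N.descFactorial k := hNk ▸ Nat.pow_sub_le_descFactorial N k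
    _ = k.factorial * N.choose k := Nat.descFactorial_eq_factorial_mul_choose N k
    _ ≤ N.choose k * k.factorial * n.factorial ^ 2 := by
        rw [mul_comm k.factorial]; exact Nat.le_mul_of_pos_right _ (by positivity)
    _ = N.choose k * (n.factorial ^ 2 * k.factorial) := by ring

section BlueStars

variable (χ : Finset ℕ → Bool) (N n : ℕ)

def disjointPairs : Finset (Finset ℕ × Finset ℕ) :=
  ((range N).powersetCard n ×ˢ (range N).powersetCard n).filter fun q => Disjoint q.1 q.2

def blueApexes (B C : Finset ℕ) : Finset ℕ :=
  (range N).filter fun a => a ∉ B ∧ a ∉ C ∧ ∀ b ∈ B, ∀ c ∈ C, χ {a, b, c} = false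

/-- The vertex sets of the blue copies of `K_{1,n,n}` in `{0, …, N - 1}`. -/
def blueStarSets : Finset (Finset ℕ) :=
  ((disjointPairs N n).sigma fun q => blueApexes χ N q.1 q.2).image
    fun s => insert s.2 (s.1.1 ∪ s.1.2)

lemma mem_sigma_disjointPairs_blueApexes {B C : Finset ℕ} {a : ℕ} :
    (⟨(B, C), a⟩ : (_ : Finset ℕ × Finset ℕ) × ℕ) ∈
        (disjointPairs N n).sigma (fun q => blueApexes χ N q.1 q.2) ↔
      (B ⊆ range N ∧ #B = n) ∧ (C ⊆ range N ∧ #C = n) ∧ Disjoint B C ∧ a < N ∧ a ∉ B ∧ a ∉ C ∧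
        ∀ b ∈ B, ∀ c ∈ C, χ {a, b, c} = false := by
  simp only [mem_sigma, disjointPairs, blueApexes, mem_filter, mem_product, mem_powersetCard,
    mem_range, and_assoc]

lemma blueStarSets_subset : blueStarSets χ N n ⊆ (range N).powersetCard (2 * n + 1) := by
  simp only [blueStarSets, image_subset_iff]
  rintro ⟨⟨B, C⟩, a⟩ h
  obtain ⟨⟨hB, hBn⟩, ⟨hC, hCn⟩, hBC, ha, haB, haC, -⟩ :=
    (mem_sigma_disjointPairs_blueApexes χ N n).1 h
  refine mem_powersetCard.2 ⟨insert_subset (mem_range.2 ha) (union_subset hB hC), ?_⟩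
  rw [card_insert_of_notMem (by simp [haB, haC]), card_union_of_disjoint hBC, hBn, hCn]
  ring

lemma card_blueApexes_lt (hblue : ¬ hasMonoCopy N χ (tripartite n n n) false)
    {B C : Finset ℕ} (hB : B ⊆ range N) (hC : C ⊆ range N) (hBn : #B = n) (hCn : #C = n)
    (hBC : Disjoint B C) : #(blueApexes χ N B C) < n := by
  by_contra! h
  obtain ⟨A, hA, hAn⟩ := exists_subset_card_eq h
  have hA' (a : ℕ) (ha : a ∈ A) := mem_filter.1 (hA ha)
  exact hblue (hasMonoCopyIn_range.1 (hasMonoCopyIn_tripartite_iff.2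
    ⟨A, B, C, fun a ha => (hA' a ha).1, hB, hC, hAn, hBn, hCn,
      disjoint_left.2 fun a ha => (hA' a ha).2.1, disjoint_left.2 fun a ha => (hA' a ha).2.2.1,
      hBC, fun a ha => (hA' a ha).2.2.2⟩))

lemma card_blueStarSets_le (hblue : ¬ hasMonoCopy N χ (tripartite n n n) false) :
    #(blueStarSets χ N n) ≤ (n - 1) * N.choose n ^ 2 :=
  calc #(blueStarSets χ N n)
      ≤ #((disjointPairs N n).sigma fun q => blueApexes χ N q.1 q.2) := card_image_le
    _ = ∑ q ∈ disjointPairs N n, #(blueApexes χ N q.1 q.2) := card_sigma _ _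
    _ ≤ #(disjointPairs N n) * (n - 1) := by
        refine sum_le_card_nsmul _ _ _ fun q hq => ?_
        simp only [disjointPairs, mem_filter, mem_product, mem_powersetCard] at hq
        have := card_blueApexes_lt χ N n hblue hq.1.1.1 hq.1.2.1 hq.1.1.2 hq.1.2.2 hq.2
        omega
    _ ≤ N.choose n ^ 2 * (n - 1) := by
        gcongr
        refine (card_filter_le _ _).trans_eq ?_
        rw [card_product, card_powersetCard, card_range, sq]
    _ = (n - 1) * N.choose n ^ 2 := mul_comm _ _

lemma exists_mem_blueStarSets_subset {m : ℕ} {H : ThreeGraph}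
    (hm : Arrows m H (tripartite 1 n n)) (hred : ¬ hasMonoCopy N χ H true) :
    ∀ S ∈ (range N).powersetCard m, ∃ K ∈ blueStarSets χ N n, K ⊆ S := by
  intro S hS
  obtain ⟨hSN, hSm⟩ := mem_powersetCard.1 hS
  obtain h | h := hm.hasMonoCopyIn χ hSm
  · exact absurd (hasMonoCopyIn_range.1 (h.mono hSN)) hred
  obtain ⟨A, B, C, hA, hB, hC, hA1, hBn, hCn, hAB, hAC, hBC, hcol⟩ :=
    hasMonoCopyIn_tripartite_iff.1 h
  obtain ⟨a, rfl⟩ := card_eq_one.1 hA1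
  have ha : a ∈ S := singleton_subset_iff.1 hA
  refine ⟨insert a (B ∪ C), mem_image.2 ⟨⟨(B, C), a⟩, ?_, rfl⟩,
    insert_subset ha (union_subset hB hC)⟩
  exact (mem_sigma_disjointPairs_blueApexes χ N n).2 ⟨⟨hB.trans hSN, hBn⟩, ⟨hC.trans hSN, hCn⟩,
    hBC, mem_range.1 (hSN ha), disjoint_singleton_left.1 hAB, disjoint_singleton_left.1 hAC,
    hcol a (mem_singleton_self a)⟩

end BlueStars

lemma Arrows.tripartite_pow {m n : ℕ} {H : ThreeGraph} (hn : 1 ≤ n)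
    (h : Arrows m H (tripartite 1 n n)) : Arrows (m ^ (3 * n)) H (tripartite n n n) := by
  intro χ
  by_contra hχ
  obtain ⟨hred, hblue⟩ := not_or.1 hχ
  set N := m ^ (3 * n)
  have hmN : m ≤ N := Nat.le_self_pow (by omega) m
  have hcover := exists_mem_blueStarSets_subset χ N n h hred
  have hkm : 2 * n + 1 ≤ m := by
    obtain ⟨K, hK, hKm⟩ :=
      hcover (range m) (mem_powersetCard.2 ⟨range_subset_range.2 hmN, card_range m⟩)
    simpa [(mem_powersetCard.1 (blueStarSets_subset χ N n hK)).2] using card_le_card hKm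
  have hcount := choose_le_card_mul_choose_of_covers (blueStarSets_subset χ N n)
    ((card_range N).symm ▸ hmN) hcover
  rw [card_range] at hcount
  exact (choose_mul_lt_choose hn hkm).not_ge
    (hcount.trans (Nat.mul_le_mul_right _ (card_blueStarSets_le χ N n hblue)))

/-- For every 3-graph `H` and `n ≥ 1`,
`r(H, K_{n,n,n}^{(3)}) ≤ r(H, K_{1,n,n}^{(3)})^{3n}`. -/
theorem ramsey_tripartite_le_pow (H : ThreeGraph) (n : ℕ) (hn : 1 ≤ n) :
    ramsey H (tripartite n n n) ≤ ramsey H (tripartite 1 n n) ^ (3 * n) := by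
  by_cases h : ∃ N, Arrows N H (tripartite 1 n n)
  · exact ((arrows_ramsey h).tripartite_pow hn).ramsey_le
  · rw [ramsey_eq_zero fun N hN => h ⟨N, hN.tripartite_one hn⟩]
    exact Nat.zero_le _
end

section
/- Let H be a 3-graph with at least one edge and let x, y, z ∈ V(H) be three distinct vertices such that {x,y,z} ∉ E(H) and at least one of the pairs {x,y}, {y,z}, {x,z} is not contained in the shadow ∂H. Let H' be the 3-graph obtained from H by adding the edge {x,y,z}. Then for every integer n ≥ 1, r(H', K_{1,n,n}^(3)) ≤ r(H, K_{1,n,n}^(3))^{2 v(H)}, where v(H) = |V(H)|. -/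
open Finset

structure IsMonoCopy (H : ThreeGraph) (χ : Finset ℕ → Bool) (c : Bool) (S : Set ℕ)
    (φ : ℕ → ℕ) : Prop where
  injOn : Set.InjOn φ H.verts
  mapsTo : Set.MapsTo φ H.verts S
  color : ∀ e ∈ H.edges, χ (e.image φ) = c

section MonoCopy

variable {H : ThreeGraph} {χ : Finset ℕ → Bool} {c : Bool} {S T : Set ℕ} {φ : ℕ → ℕ}

theorem hasMonoCopy_iff {N : ℕ} :
    hasMonoCopy N χ H c ↔ ∃ φ, IsMonoCopy H χ c (Set.Iio N) φ :=
  exists_congr fun _ => ⟨fun ⟨h₁, h₂, h₃⟩ => ⟨h₁, h₂, h₃⟩, fun ⟨h₁, h₂, h₃⟩ => ⟨h₁, h₂, h₃⟩⟩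

theorem IsMonoCopy.mono (hφ : IsMonoCopy H χ c S φ) (hST : S ⊆ T) : IsMonoCopy H χ c T φ :=
  ⟨hφ.injOn, hφ.mapsTo.mono_right hST, hφ.color⟩

theorem IsMonoCopy.comp {g : ℕ → ℕ} (hφ : IsMonoCopy H (fun e => χ (e.image g)) c S φ)
    (hg : Set.InjOn g S) (hgT : Set.MapsTo g S T) : IsMonoCopy H χ c T (g ∘ φ) where
  injOn := hg.comp hφ.injOn hφ.mapsTo
  mapsTo := hgT.comp hφ.mapsTo
  color e he := by simpa only [image_image] using hφ.color e he

theorem IsMonoCopy.card_verts_le {S : Finset ℕ} (hφ : IsMonoCopy H χ c S φ) :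
    #H.verts ≤ #S :=
  card_le_card_of_injOn φ hφ.mapsTo hφ.injOn

theorem isMonoCopy_iff_of_edges_eq_insert {H' : ThreeGraph} {t : Finset ℕ}
    (hv : H'.verts = H.verts) (he : H'.edges = insert t H.edges) :
    IsMonoCopy H' χ c S φ ↔ IsMonoCopy H χ c S φ ∧ χ (t.image φ) = c := by
  constructor
  · rintro ⟨h₁, h₂, h₃⟩
    rw [hv] at h₁ h₂
    rw [he] at h₃
    exact ⟨⟨h₁, h₂, fun e he' => h₃ e (mem_insert_of_mem he')⟩, h₃ t (mem_insert_self t _)⟩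
  · rintro ⟨⟨h₁, h₂, h₃⟩, ht⟩
    refine ⟨hv ▸ h₁, hv ▸ h₂, ?_⟩
    rw [he, forall_mem_insert]
    exact ⟨ht, h₃⟩

end MonoCopy

theorem Finset.exists_injOn_mapsTo_of_card_le {α β : Type*} [Nonempty β] {s : Finset α}
    {t : Finset β} (h : #s ≤ #t) : ∃ f : α → β, Set.InjOn f s ∧ Set.MapsTo f s t := by
  obtain ⟨f, hmaps, hinj⟩ := s.finite_toSet.exists_injOn_of_encard_le (t := (t : Set β))
    (by simpa only [Set.encard_coe_eq_coe_finsetCard] using Nat.cast_le.2 h)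
  exact ⟨f, hinj, hmaps⟩

section Ramsey

variable {G K : ThreeGraph} {r : ℕ}

theorem exists_isMonoCopy_of_card_eq
    (hr : ∀ χ, hasMonoCopy r χ G true ∨ hasMonoCopy r χ K false)
    (χ : Finset ℕ → Bool) {S : Finset ℕ} (hS : #S = r) :
    (∃ φ, IsMonoCopy G χ true S φ) ∨ ∃ φ, IsMonoCopy K χ false S φ := by
  obtain ⟨g, hg, hgS⟩ := exists_injOn_mapsTo_of_card_le (s := range r) (t := S) (by simp [hS])
  rw [coe_range] at hg hgS
  simp only [hasMonoCopy_iff] at hr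
  exact (hr fun e => χ (e.image g)).imp (fun ⟨φ, hφ⟩ => ⟨g ∘ φ, hφ.comp hg hgS⟩)
    (fun ⟨φ, hφ⟩ => ⟨g ∘ φ, hφ.comp hg hgS⟩)

theorem card_verts_le_of_forall_hasMonoCopy (hG : G.edges.Nonempty)
    (hr : ∀ χ, hasMonoCopy r χ G true ∨ hasMonoCopy r χ K false) : #K.verts ≤ r := by
  obtain ⟨e, he⟩ := hG
  simp only [hasMonoCopy_iff] at hr
  rcases hr fun _ => false with ⟨φ, hφ⟩ | ⟨φ, hφ⟩
  · exact absurd (hφ.color e he) Bool.false_ne_true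
  · simpa using (hφ.mono (coe_range r).symm.subset).card_verts_le

theorem ramsey_le_of_imp
    (h : (∃ N, ∀ χ, hasMonoCopy N χ G true ∨ hasMonoCopy N χ K false) →
      ∀ χ, hasMonoCopy r χ G true ∨ hasMonoCopy r χ K false) :
    ramsey G K ≤ r := by
  by_cases hfin : ∃ N, ∀ χ, hasMonoCopy N χ G true ∨ hasMonoCopy N χ K false
  · exact Nat.sInf_le (h hfin)
  · have h₀ : ramsey G K = 0 :=
      Nat.sInf_eq_zero.2 (.inr (Set.eq_empty_iff_forall_notMem.2 fun N hN => hfin ⟨N, hN⟩))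
    exact h₀ ▸ Nat.zero_le r

theorem forall_hasMonoCopy_ramsey
    (h : ∃ r, ∀ χ, hasMonoCopy r χ G true ∨ hasMonoCopy r χ K false) :
    ∀ χ, hasMonoCopy (ramsey G K) χ G true ∨ hasMonoCopy (ramsey G K) χ K false :=
  Nat.sInf_mem h

end Ramsey

theorem exists_eq_of_mem_tripartite_edges {a b c : ℕ} {e : Finset ℕ}
    (he : e ∈ (tripartite a b c).edges) :
    ∃ i j k, i < a ∧ a ≤ j ∧ j < a + b ∧ a + b ≤ k ∧ k < a + b + c ∧ e = {i, j, k} := by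
  simp only [tripartite, mem_filter, mem_powersetCard, card_eq_one] at he
  obtain ⟨⟨he_sub, he_card⟩, ⟨i, hi⟩, ⟨j, hj⟩, ⟨k, hk⟩⟩ := he
  have mem_of_filter_eq {p : ℕ → Prop} [DecidablePred p] {x : ℕ} (h : e.filter p = {x}) :
      x ∈ e ∧ p x :=
    mem_filter.1 (h ▸ mem_singleton_self x)
  obtain ⟨hie, hi⟩ := mem_of_filter_eq hi
  obtain ⟨hje, hj⟩ := mem_of_filter_eq hj
  obtain ⟨hke, hk⟩ := mem_of_filter_eq hk
  have hk' := mem_range.1 (he_sub hke)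
  refine ⟨i, j, k, hi, hj.1, hj.2, hk, hk', (eq_of_subset_of_card_le ?_ ?_).symm⟩
  · simp [insert_subset_iff, hie, hje, hke]
  · rw [he_card, card_eq_three.2 ⟨i, j, k, by omega, by omega, by omega, rfl⟩]

theorem exists_isMonoCopy_tripartite {χ : Finset ℕ → Bool} {n c : ℕ} {A B : Finset ℕ}
    (hcA : c ∉ A) (hcB : c ∉ B) (hA : 2 * n ≤ #A) (hB : n ≤ #B)
    (hblue : ∀ a ∈ A, ∀ b ∈ B, a ≠ b → χ {c, a, b} = false) :
    ∃ ψ, IsMonoCopy (tripartite 1 n n) χ false ↑(insert c (A ∪ B)) ψ := by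
  obtain ⟨B', hB'B, hB'⟩ := exists_subset_card_eq hB
  obtain ⟨A', hA'A, hA'⟩ := exists_subset_card_eq (s := A \ B') (n := n)
    (by have := le_card_sdiff B' A; omega)
  have hA'B' : ∀ a ∈ A', a ∉ B' := fun a ha => (mem_sdiff.1 (hA'A ha)).2
  replace hA'A : A' ⊆ A := hA'A.trans sdiff_subset
  obtain ⟨f, hf, hfA'⟩ := exists_injOn_mapsTo_of_card_le (s := Ico 1 (1 + n)) (t := A')
    (by simp [hA'])
  obtain ⟨g, hg, hgB'⟩ := exists_injOn_mapsTo_of_card_le (s := Ico (1 + n) (1 + n + n))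
    (t := B') (by simp [hB'])
  simp only [Set.InjOn, Set.MapsTo, coe_Ico, Set.mem_Ico, mem_coe, and_imp] at hf hg hfA' hgB'
  have hcA' : c ∉ A' := fun h => hcA (hA'A h)
  have hcB' : c ∉ B' := fun h => hcB (hB'B h)
  refine ⟨fun i => if i = 0 then c else if i < 1 + n then f i else g i, ?_, ?_, ?_⟩
  · intro i hi j hj hij
    simp only [tripartite, coe_range, Set.mem_Iio] at hi hj
    dsimp only at hij
    split_ifs at hij <;> grind
  · intro i hi
    simp only [tripartite, coe_range, Set.mem_Iio] at hi
    simp only [coe_insert, coe_union, Set.mem_insert_iff, Set.mem_union, mem_coe]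
    split_ifs <;> grind
  · intro e he
    obtain ⟨i, j, k, hi, hj, hj', hk, hk', rfl⟩ := exists_eq_of_mem_tripartite_edges he
    obtain rfl : i = 0 := by omega
    have hfj := hfA' hj hj'
    have hgk := hgB' hk hk'
    simp only [image_insert, image_singleton, if_pos, if_neg (show j ≠ 0 by omega),
      if_pos hj', if_neg (show k ≠ 0 by omega), if_neg (show ¬k < 1 + n by omega)]
    exact hblue _ (hA'A hfj) _ (hB'B hgk) fun h => hA'B' _ hfj (h ▸ hgk)

theorem pair_mem_shadowOf {E : Finset (Finset ℕ)} {e : Finset ℕ} (he : e ∈ E) {p q : ℕ}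
    (hpq : p ≠ q) (hp : p ∈ e) (hq : q ∈ e) : {p, q} ∈ shadowOf E :=
  mem_biUnion.2 ⟨e, he, mem_powersetCard.2 ⟨insert_subset hp (singleton_subset_iff.2 hq),
    card_pair hpq⟩⟩

section Gluing

variable {H : ThreeGraph} {χ : Finset ℕ → Bool} {c : Bool} {T : Set ℕ} {p q : ℕ}

theorem IsMonoCopy.update {φ₁ φ₂ : ℕ → ℕ} (h₁ : IsMonoCopy H χ c T φ₁)
    (h₂ : IsMonoCopy H χ c T φ₂) (hpq : {p, q} ∉ shadowOf H.edges)
    (hagree : ∀ w ∈ H.verts, w ≠ p → w ≠ q → φ₁ w = φ₂ w) (hne : φ₁ p ≠ φ₂ q) :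
    IsMonoCopy H χ c T (Function.update φ₁ q (φ₂ q)) where
  injOn u hu u' hu' h := by
    have hφ₁q : ∀ w ∈ H.verts, w ≠ q → q ∈ H.verts → φ₁ w ≠ φ₂ q := by
      intro w hw hwq hq h
      by_cases hwp : w = p
      · exact hne (hwp ▸ h)
      · exact hwq (h₂.injOn hw hq (hagree w hw hwp hwq ▸ h))
    simp only [Function.update_apply] at h
    split_ifs at h with huq hu'q hu'q
    · rw [huq, hu'q]
    · exact absurd h.symm (hφ₁q u' hu' hu'q (huq ▸ hu))
    · exact absurd h (hφ₁q u hu huq (hu'q ▸ hu'))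
    · exact h₁.injOn hu hu' h
  mapsTo u hu := by
    rw [Function.update_apply]
    split_ifs with h
    · exact h₂.mapsTo (h ▸ hu)
    · exact h₁.mapsTo hu
  color e he := by
    by_cases hqe : q ∈ e
    · -- an edge through `q` misses `p` since `{p, q} ∉ ∂H`, so the glued map agrees with `φ₂` on it
      rw [image_congr fun w hw => ?_]
      · exact h₂.color e he
      rw [Function.update_apply]
      split_ifs with hwq
      · rw [hwq]
      · refine hagree w (H.subset_verts e he hw) (fun hwp => hpq ?_) hwq
        exact pair_mem_shadowOf he (hwp ▸ hwq) (hwp ▸ hw) hqe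
    · rw [image_congr fun w hw => Function.update_of_ne (ne_of_mem_of_not_mem hw hqe) _ _]
      exact h₁.color e he

end Gluing

theorem exists_isMonoCopy_insert_or_tripartite_of_agree {H : ThreeGraph} {χ : Finset ℕ → Bool}
    {T : Set ℕ} {ι : Type*} {𝒮 : Finset ι} {F : ι → ℕ → ℕ} {n p q s : ℕ}
    (hF : ∀ i ∈ 𝒮, IsMonoCopy H χ true T (F i))
    (hagree : ∀ i ∈ 𝒮, ∀ j ∈ 𝒮, ∀ w ∈ H.verts, w ≠ p → w ≠ q → F i w = F j w)
    (hp : p ∈ H.verts) (hq : q ∈ H.verts) (hs : s ∈ H.verts)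
    (hpq : p ≠ q) (hsp : s ≠ p) (hsq : s ≠ q) (hshadow : {p, q} ∉ shadowOf H.edges)
    (hA : 2 * n < #(𝒮.image (F · p))) (hB : n ≤ #(𝒮.image (F · q))) :
    (∃ φ, IsMonoCopy H χ true T φ ∧ χ (({p, q, s} : Finset ℕ).image φ) = true) ∨
      ∃ ψ, IsMonoCopy (tripartite 1 n n) χ false T ψ := by
  obtain ⟨i₀, hi₀⟩ : 𝒮.Nonempty := image_nonempty.1 (card_pos.1 (Nat.zero_lt_of_lt hA))
  have hs_eq (i : ι) (hi : i ∈ 𝒮) : F i s = F i₀ s := hagree i hi i₀ hi₀ s hs hsp hsq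
  by_cases hred : ∃ i ∈ 𝒮, ∃ j ∈ 𝒮, F i p ≠ F j q ∧ χ {F i₀ s, F i p, F j q} = true
  · obtain ⟨i, hi, j, hj, hne, hχ⟩ := hred
    refine .inl ⟨_, (hF i hi).update (hF j hj) hshadow (hagree i hi j hj) hne, ?_⟩
    rw [← hχ]
    congr 1
    simp only [image_insert, image_singleton, Function.update_of_ne hpq,
      Function.update_of_ne hsq, Function.update_self, hs_eq i hi]
    rw [pair_comm, insert_comm]
  · push Not at hred
    have hc_notMem (x : ℕ) (hx : x ∈ H.verts) (hxs : x ≠ s) : F i₀ s ∉ 𝒮.image (F · x) := by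
      simp only [mem_image, not_exists, not_and]
      intro i hi h
      rw [← hs_eq i hi] at h
      exact hxs ((hF i hi).injOn hx hs h)
    obtain ⟨ψ, hψ⟩ := exists_isMonoCopy_tripartite (hc_notMem p hp hsp.symm)
      (hc_notMem q hq hsq.symm) hA.le hB (by
        simp only [mem_image]
        rintro _ ⟨i, hi, rfl⟩ _ ⟨j, hj, rfl⟩ hne
        simpa using hred i hi j hj hne)
    refine .inr ⟨ψ, hψ.mono ?_⟩
    simp only [coe_insert, coe_union, Set.insert_subset_iff, Set.union_subset_iff, coe_image]
    exact ⟨(hF i₀ hi₀).mapsTo hs, fun _ ⟨i, hi, h⟩ => h ▸ (hF i hi).mapsTo hp,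
      fun _ ⟨i, hi, h⟩ => h ▸ (hF i hi).mapsTo hq⟩

section Counting

variable {α : Type*} [DecidableEq α] {r : ℕ}

theorem card_filter_subset_powersetCard_le {X Q : Finset α} (hQ : Q ⊆ X) :
    #{S ∈ X.powersetCard r | Q ⊆ S} ≤ (#X - #Q).choose (r - #Q) :=
  calc #{S ∈ X.powersetCard r | Q ⊆ S}
      ≤ #(((X \ Q).powersetCard (r - #Q)).image (· ∪ Q)) := by
        refine card_le_card fun S hS => ?_
        rw [mem_filter, mem_powersetCard] at hS
        refine mem_image.2 ⟨S \ Q, mem_powersetCard.2 ⟨sdiff_subset_sdiff hS.1.1 le_rfl, ?_⟩,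
          sdiff_union_of_subset hS.2⟩
        rw [card_sdiff_of_subset hS.2, hS.1.2]
    _ ≤ #((X \ Q).powersetCard (r - #Q)) := card_image_le
    _ = (#X - #Q).choose (r - #Q) := by rw [card_powersetCard, card_sdiff_of_subset hQ]

theorem card_le_card_image_mul_choose {X Q : Finset α} {𝒮 : Finset (Finset α)}
    {g : Finset α → α} (h𝒮 : 𝒮 ⊆ X.powersetCard r) (hg : ∀ S ∈ 𝒮, g S ∉ Q ∧ insert (g S) Q ⊆ S) :
    #𝒮 ≤ #(𝒮.image g) * (#X - (#Q + 1)).choose (r - (#Q + 1)) :=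
  calc #𝒮 ≤ #((𝒮.image g).biUnion fun a => {S ∈ X.powersetCard r | insert a Q ⊆ S}) :=
        card_le_card fun S hS =>
          mem_biUnion.2 ⟨g S, mem_image_of_mem g hS, mem_filter.2 ⟨h𝒮 hS, (hg S hS).2⟩⟩
    _ ≤ _ := by
        refine card_biUnion_le_card_mul _ _ _ fun a ha => ?_
        obtain ⟨S, hS, rfl⟩ := mem_image.1 ha
        have hQX := (hg S hS).2.trans (mem_powersetCard.1 (h𝒮 hS)).1
        simpa only [card_insert_of_notMem (hg S hS).1] using
          card_filter_subset_powersetCard_le hQX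

end Counting

theorem mul_pow_mul_choose_lt_choose {k r m N : ℕ} (hm : 1 ≤ m) (hmN : 2 * m ≤ N)
    (hN : 2 ^ m * k * r ^ m < N) : k * N ^ (m - 1) * r.choose m < N.choose m := by
  have hN_pow : N ^ m = N * N ^ (m - 1) := by rw [← pow_succ', Nat.sub_add_cancel hm]
  have key : 2 ^ m * (k * N ^ (m - 1) * r ^ m) < 2 ^ m * (N + 1 - m) ^ m :=
    calc 2 ^ m * (k * N ^ (m - 1) * r ^ m) = 2 ^ m * k * r ^ m * N ^ (m - 1) := by ring
      _ < N * N ^ (m - 1) := Nat.mul_lt_mul_of_pos_right hN (pow_pos (by omega) _)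
      _ = N ^ m := hN_pow.symm
      _ ≤ (2 * (N + 1 - m)) ^ m := Nat.pow_le_pow_left (by omega) m
      _ = 2 ^ m * (N + 1 - m) ^ m := mul_pow 2 _ m
  refine Nat.lt_of_mul_lt_mul_left (a := m.factorial) ?_
  calc m.factorial * (k * N ^ (m - 1) * r.choose m)
      = k * N ^ (m - 1) * r.descFactorial m := by
        rw [Nat.descFactorial_eq_factorial_mul_choose]; ring
    _ ≤ k * N ^ (m - 1) * r ^ m := Nat.mul_le_mul_left _ (Nat.descFactorial_le_pow r m)
    _ < (N + 1 - m) ^ m := Nat.lt_of_mul_lt_mul_left key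
    _ ≤ N.descFactorial m := Nat.pow_sub_le_descFactorial N m
    _ = m.factorial * N.choose m := Nat.descFactorial_eq_factorial_mul_choose N m

theorem pow_mul_choose_lt_choose {k r v : ℕ} (hk : k < r) (hv : 2 ≤ v) (hvr : v ≤ r) :
    (r ^ (2 * v)) ^ (v - 2) * (k * (r ^ (2 * v) - (v - 1)).choose (r - (v - 1))) <
      (r ^ (2 * v)).choose r := by
  set N := r ^ (2 * v)
  set m := v - 1
  have hr : 0 < r := by omega
  have hrN : r ≤ N := Nat.le_self_pow (by omega) r
  have hmN : 2 * m ≤ N :=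
    calc 2 * m ≤ 2 * r := by omega
      _ ≤ r * r := Nat.mul_le_mul_right r (by omega)
      _ = r ^ 2 := (sq r).symm
      _ ≤ N := Nat.pow_le_pow_right hr (by omega)
  have hN : 2 ^ m * k * r ^ m < N :=
    calc 2 ^ m * k * r ^ m < 2 ^ m * r * r ^ m := by gcongr
      _ ≤ r ^ m * r * r ^ m := by gcongr; omega
      _ = r ^ (2 * m + 1) := by ring
      _ ≤ N := Nat.pow_le_pow_right hr (by omega)
  refine Nat.lt_of_mul_lt_mul_right (a := r.choose m) ?_
  rw [Nat.choose_mul (by omega)]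
  calc N ^ (v - 2) * (k * (N - m).choose (r - m)) * r.choose m
      = k * N ^ (m - 1) * r.choose m * (N - m).choose (r - m) := by
        rw [show v - 2 = m - 1 by omega]; ring
    _ < N.choose m * (N - m).choose (r - m) :=
        Nat.mul_lt_mul_of_pos_right (mul_pow_mul_choose_lt_choose (by omega) hmN hN)
          (Nat.choose_pos (by omega))

theorem exists_lt_card_subfamily_eqOn {ι : Type*} (𝒯 : Finset ι) (F : ι → ℕ → ℕ)
    (W : Finset ℕ) {N k : ℕ} (hF : ∀ i ∈ 𝒯, ∀ w ∈ W, F i w < N) (hk : N ^ #W * k < #𝒯) :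
    ∃ 𝒮 ⊆ 𝒯, k < #𝒮 ∧ ∀ i ∈ 𝒮, ∀ j ∈ 𝒮, Set.EqOn (F i) (F j) W := by
  obtain ⟨ω, -, hω⟩ := exists_lt_card_fiber_of_mul_lt_card_of_maps_to
    (t := Fintype.piFinset fun _ : W => range N) (f := fun i => W.restrict (F i))
    (fun i hi => Fintype.mem_piFinset.2 fun w => mem_range.2 (hF i hi w w.2))
    (by simpa only [Fintype.card_piFinset, card_range, prod_const, card_univ,
      Fintype.card_coe] using hk)
  refine ⟨_, filter_subset _ _, hω, fun i hi j hj w hw => ?_⟩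
  exact (congrFun (mem_filter.1 hi).2 ⟨w, hw⟩).trans (congrFun (mem_filter.1 hj).2 ⟨w, hw⟩).symm

theorem exists_agreeing_family {V : Finset ℕ} {p q n r : ℕ} (hp : p ∈ V) (hq : q ∈ V)
    (hpq : p ≠ q) (hnr : 2 * n < r) {F : Finset ℕ → ℕ → ℕ}
    (hF : ∀ S ∈ (range (r ^ (2 * #V))).powersetCard r,
      Set.InjOn (F S) V ∧ Set.MapsTo (F S) V S) :
    ∃ 𝒮 ⊆ (range (r ^ (2 * #V))).powersetCard r,
      (∀ S ∈ 𝒮, ∀ S' ∈ 𝒮, ∀ w ∈ V, w ≠ p → w ≠ q → F S w = F S' w) ∧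
      2 * n < #(𝒮.image (F · p)) ∧ 2 * n < #(𝒮.image (F · q)) := by
  set N := r ^ (2 * #V)
  set 𝒯 := (range N).powersetCard r
  set W := (V.erase p).erase q
  have hWV : W ⊆ V := (erase_subset _ _).trans (erase_subset _ _)
  have hW : #W = #V - 2 := by
    rw [card_erase_of_mem (mem_erase.2 ⟨hpq.symm, hq⟩), card_erase_of_mem hp]; omega
  have hV : 2 ≤ #V := card_pair hpq ▸ card_le_card (insert_subset hp (singleton_subset_iff.2 hq))
  have hVr : #V ≤ r := by
    obtain ⟨S, hS⟩ : 𝒯.Nonempty :=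
      powersetCard_nonempty.2 (by simpa using Nat.le_self_pow (by omega) r)
    exact (card_le_card_of_injOn (F S) (hF S hS).2 (hF S hS).1).trans
      (mem_powersetCard.1 hS).2.le
  obtain ⟨𝒮, h𝒮, h𝒮_card, hagree⟩ := exists_lt_card_subfamily_eqOn 𝒯 F W
    (k := 2 * n * (N - (#V - 1)).choose (r - (#V - 1)))
    (fun S hS w hw => mem_range.1 ((mem_powersetCard.1 hS).1 ((hF S hS).2 (hWV hw))))
    (by simpa only [hW, 𝒯, card_powersetCard, card_range] using pow_mul_choose_lt_choose hnr hV hVr)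
  obtain ⟨S₀, hS₀⟩ : 𝒮.Nonempty := card_pos.1 (Nat.zero_lt_of_lt h𝒮_card)
  have hlarge (x : ℕ) (hx : x ∈ V) (hxW : x ∉ W) : 2 * n < #(𝒮.image (F · x)) := by
    have hcover := card_le_card_image_mul_choose (Q := W.image (F S₀)) (g := (F · x)) h𝒮
      fun S hS => by
        obtain ⟨hinj, hmaps⟩ := hF S (h𝒮 hS)
        rw [← image_congr (hagree S hS S₀ hS₀)]
        refine ⟨fun h => ?_,
          insert_subset (hmaps hx) (image_subset_iff.2 fun w hw => hmaps (hWV hw))⟩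
        obtain ⟨w, hw, hw'⟩ := mem_image.1 h
        exact hxW (hinj (hWV hw) hx hw' ▸ hw)
    rw [card_image_of_injOn ((hF S₀ (h𝒮 hS₀)).1.mono (coe_subset.2 hWV)), hW, card_range,
      show #V - 2 + 1 = #V - 1 by omega] at hcover
    exact Nat.lt_of_mul_lt_mul_right (h𝒮_card.trans_le hcover)
  exact ⟨𝒮, h𝒮, fun S hS S' hS' w hw hwp hwq => hagree S hS S' hS' (by simp [W, *]),
    hlarge p hp (by simp [W]), hlarge q hq (by simp [W])⟩

theorem exists_isMonoCopy_insert_or_hasMonoCopy_tripartite {H : ThreeGraph} {n r p q s : ℕ}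
    (hr : ∀ χ, hasMonoCopy r χ H true ∨ hasMonoCopy r χ (tripartite 1 n n) false)
    (hnr : 2 * n < r) (hp : p ∈ H.verts) (hq : q ∈ H.verts) (hs : s ∈ H.verts)
    (hpq : p ≠ q) (hsp : s ≠ p) (hsq : s ≠ q) (hshadow : {p, q} ∉ shadowOf H.edges)
    (χ : Finset ℕ → Bool) :
    (∃ φ, IsMonoCopy H χ true (Set.Iio (r ^ (2 * #H.verts))) φ ∧
        χ (({p, q, s} : Finset ℕ).image φ) = true) ∨
      hasMonoCopy (r ^ (2 * #H.verts)) χ (tripartite 1 n n) false := by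
  set N := r ^ (2 * #H.verts)
  by_cases hblue : hasMonoCopy N χ (tripartite 1 n n) false
  · exact .inr hblue
  have hsub (S : Finset ℕ) (hS : S ∈ (range N).powersetCard r) : ↑S ⊆ Set.Iio N :=
    fun _ hx => mem_range.1 ((mem_powersetCard.1 hS).1 hx)
  have hred (S : Finset ℕ) (hS : S ∈ (range N).powersetCard r) :
      ∃ φ, IsMonoCopy H χ true S φ :=
    (exists_isMonoCopy_of_card_eq hr χ (mem_powersetCard.1 hS).2).resolve_right
      fun ⟨ψ, hψ⟩ => hblue (hasMonoCopy_iff.2 ⟨ψ, hψ.mono (hsub S hS)⟩)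
  choose! F hF using hred
  obtain ⟨𝒮, h𝒮, hagree, hA, hB⟩ :=
    exists_agreeing_family hp hq hpq hnr fun S hS => ⟨(hF S hS).injOn, (hF S hS).mapsTo⟩
  exact (exists_isMonoCopy_insert_or_tripartite_of_agree
    (fun S hS => (hF S (h𝒮 hS)).mono (hsub S (h𝒮 hS))) hagree hp hq hs hpq hsp hsq hshadow hA
    (by omega)).imp_right fun ⟨ψ, hψ⟩ => hasMonoCopy_iff.2 ⟨ψ, hψ⟩

theorem ramsey_add_edge_general (H : ThreeGraph) (hne : H.edges.Nonempty) (x y z : ℕ)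
    (hx : x ∈ H.verts) (hy : y ∈ H.verts) (hz : z ∈ H.verts)
    (hxy : x ≠ y) (hyz : y ≠ z) (hxz : x ≠ z)
    (hshadow : ({x, y} : Finset ℕ) ∉ shadowOf H.edges ∨
      ({y, z} : Finset ℕ) ∉ shadowOf H.edges ∨ ({x, z} : Finset ℕ) ∉ shadowOf H.edges)
    (H' : ThreeGraph) (hv : H'.verts = H.verts)
    (he : H'.edges = insert ({x, y, z} : Finset ℕ) H.edges)
    (n : ℕ) :
    ramsey H' (tripartite 1 n n) ≤ ramsey H (tripartite 1 n n) ^ (2 * H.verts.card) := by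
  have hcopy {χ c S φ} :=
    isMonoCopy_iff_of_edges_eq_insert (χ := χ) (c := c) (S := S) (φ := φ) hv he
  refine ramsey_le_of_imp fun hfin χ => ?_
  have hr := forall_hasMonoCopy_ramsey (G := H) (K := tripartite 1 n n) <| hfin.imp fun N hN χ =>
    (hN χ).imp_left fun h =>
      let ⟨φ, hφ⟩ := hasMonoCopy_iff.1 h
      hasMonoCopy_iff.2 ⟨φ, (hcopy.1 hφ).1⟩
  have hnr : 2 * n < ramsey H (tripartite 1 n n) := by
    have := card_verts_le_of_forall_hasMonoCopy hne hr
    rw [show #(tripartite 1 n n).verts = 1 + n + n from card_range _] at this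
    omega
  have key {p q s : ℕ} (hp : p ∈ H.verts) (hq : q ∈ H.verts) (hs : s ∈ H.verts) (hpq : p ≠ q)
      (hsp : s ≠ p) (hsq : s ≠ q) (hpq_shadow : {p, q} ∉ shadowOf H.edges)
      (hpqs : ({p, q, s} : Finset ℕ) = {x, y, z}) :=
    (exists_isMonoCopy_insert_or_hasMonoCopy_tripartite hr hnr hp hq hs hpq hsp hsq hpq_shadow
      χ).imp_left fun ⟨φ, hφ, hχ⟩ => hasMonoCopy_iff.2 ⟨φ, hcopy.2 ⟨hφ, hpqs ▸ hχ⟩⟩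
  rcases hshadow with h | h | h
  · exact key hx hy hz hxy hxz.symm hyz.symm h rfl
  · exact key hy hz hx hyz hxy hxz h (by rw [pair_comm, insert_comm])
  · exact key hx hz hy hxz hxy.symm hyz h (by rw [pair_comm])

/-- Let `H` be a 3-graph with at least one edge, `x, y, z ∈ V(H)` distinct
with `{x,y,z} ∉ E(H)` such that at least one of the pairs `{x,y}, {y,z}, {x,z}` is not in the
shadow `∂H`, and let `H'` be `H` with the edge `{x,y,z}` added. Then
`r(H', K_{1,n,n}^{(3)}) ≤ r(H, K_{1,n,n}^{(3)})^{2 v(H)}`. -/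
theorem ramsey_add_edge (H : ThreeGraph) (hne : H.edges.Nonempty) (x y z : ℕ)
    (hx : x ∈ H.verts) (hy : y ∈ H.verts) (hz : z ∈ H.verts)
    (hxy : x ≠ y) (hyz : y ≠ z) (hxz : x ≠ z)
    (hnotedge : ({x, y, z} : Finset ℕ) ∉ H.edges)
    (hshadow : ({x, y} : Finset ℕ) ∉ shadowOf H.edges ∨
      ({y, z} : Finset ℕ) ∉ shadowOf H.edges ∨ ({x, z} : Finset ℕ) ∉ shadowOf H.edges)
    (H' : ThreeGraph) (hv : H'.verts = H.verts)
    (he : H'.edges = insert ({x, y, z} : Finset ℕ) H.edges)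
    (n : ℕ) (hn : 1 ≤ n) :
    ramsey H' (tripartite 1 n n) ≤ ramsey H (tripartite 1 n n) ^ (2 * H.verts.card) :=
  ramsey_add_edge_general H hne x y z hx hy hz hxy hyz hxz hshadow H' hv he n
end

section
/- For every integer k ≥ 3, there is a constant c = c(k) > 0 such that for every integer n > 2^k, there is a simple graph G on m = ⌊c (n / log n)^{√k/(64 (log k)^5)}⌋ vertices with no independent set of size n, and such that for every integer r with k^{1/2}/(16 (log k)^2) ≤ r ≤ k, every set of r vertices of G induces fewer than r^2/(log k)^3 edges (log denotes the natural logarithm). -/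
/-!
Take `c = 1`. If `m < n` the empty graph works. Otherwise `n ≤ m ≤ (n / log n) ^ α` with
`α = √k / (64 (log k)^5)` forces `α > 1`, i.e. `k > 4096 (log k)^10`, and we take the random
graph `G(m, p)` with `p = n^{-1/2}`. The expected number of independent `n`-sets is at most
`m^n (1 - p)^(n choose 2) ≤ 1/4`, and for each admissible `r` the expected number of `r`-sets
spanning at least `t = ⌈r² / (log k)³⌉` edges is at most `m^r 2^(r²) p^t ≤ 1 / (4k)`. The total
is below `1`, so some graph has no bad set. Probabilities are finite sums of the weights
`p^|E| (1 - p)^(|U| - |E|)` of edge sets `E ⊆ U`.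
-/

open Finset Real

section UnionBound
variable {β ι M : Type*} [AddCommMonoid M] [PartialOrder M] [IsOrderedAddMonoid M]

theorem Finset.sum_filter_exists_le (s : Finset β) (w : β → M) (hw : ∀ x ∈ s, 0 ≤ w x)
    (I : Finset ι) (B : ι → β → Prop) [∀ i, DecidablePred (B i)]
    [DecidablePred fun x => ∃ i ∈ I, B i x] :
    ∑ x ∈ s with ∃ i ∈ I, B i x, w x ≤ ∑ i ∈ I, ∑ x ∈ s with B i x, w x := by
  simp only [sum_filter]
  rw [sum_comm]
  refine sum_le_sum fun x hx => ?_
  split_ifs with hB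
  · obtain ⟨i, hi, hBi⟩ := hB
    calc w x = if B i x then w x else 0 := (if_pos hBi).symm
      _ ≤ ∑ j ∈ I, if B j x then w x else 0 :=
        single_le_sum (f := fun j => if B j x then w x else 0)
          (fun j _ => by split_ifs <;> simp [hw x hx]) hi
  · exact sum_nonneg fun j _ => by split_ifs <;> simp [hw x hx]

theorem Finset.exists_forall_notMem_of_sum_lt (s : Finset β) (w : β → M) (hw : ∀ x, 0 ≤ w x)
    (I : Finset ι) (bad : ι → Finset β) (h : ∑ i ∈ I, ∑ x ∈ bad i, w x < ∑ x ∈ s, w x) :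
    ∃ x ∈ s, ∀ i ∈ I, x ∉ bad i := by
  classical
  by_contra! hall
  refine h.not_ge ?_
  calc ∑ x ∈ s, w x = ∑ x ∈ s with ∃ i ∈ I, x ∈ bad i, w x :=
        (sum_filter_of_ne fun x hx _ => hall x hx).symm
    _ ≤ ∑ i ∈ I, ∑ x ∈ s with x ∈ bad i, w x := sum_filter_exists_le s w (fun x _ => hw x) I _
    _ ≤ ∑ i ∈ I, ∑ x ∈ bad i, w x := sum_le_sum fun i _ =>
        sum_le_sum_of_subset_of_nonneg (by rw [filter_mem_eq_inter]; exact inter_subset_right)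
          fun x _ _ => hw x

end UnionBound

section SubsetWeight
variable {α : Type*} (p : ℝ) (U : Finset α)

/-- The probability that the random subset of `U` containing each element independently with
probability `p` is `E` (for `E ⊆ U`). -/
def subsetWeight (E : Finset α) : ℝ := p ^ #E * (1 - p) ^ (#U - #E)

theorem subsetWeight_nonneg {p : ℝ} (hp0 : 0 ≤ p) (hp1 : p ≤ 1) (E : Finset α) :
    0 ≤ subsetWeight p U E :=
  mul_nonneg (pow_nonneg hp0 _) (pow_nonneg (sub_nonneg.mpr hp1) _)

theorem sum_subsetWeight_powerset : ∑ E ∈ U.powerset, subsetWeight p U E = 1 := by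
  simp only [subsetWeight]
  rw [sum_pow_mul_eq_add_pow, add_sub_cancel, one_pow]

variable [DecidableEq α]

theorem sum_subsetWeight_disjoint {A : Finset α} (hA : A ⊆ U) :
    ∑ E ∈ U.powerset with Disjoint A E, subsetWeight p U E = (1 - p) ^ #A := by
  have hset : {E ∈ U.powerset | Disjoint A E} = (U \ A).powerset := by
    ext E
    simp only [mem_filter, mem_powerset, subset_sdiff]
    tauto
  have hcardA : #(U \ A) = #U - #A := card_sdiff_of_subset hA
  have hAU : #A ≤ #U := card_le_card hA
  calc ∑ E ∈ U.powerset with Disjoint A E, subsetWeight p U E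
      = ∑ E ∈ (U \ A).powerset, (1 - p) ^ #A * subsetWeight p (U \ A) E := by
        rw [hset]
        refine sum_congr rfl fun E hE => ?_
        have hE : #E ≤ #(U \ A) := card_le_card (mem_powerset.mp hE)
        simp only [subsetWeight]
        rw [show #U - #E = #A + (#(U \ A) - #E) by omega, pow_add]
        ring
    _ = (1 - p) ^ #A := by rw [← mul_sum, sum_subsetWeight_powerset, mul_one]

theorem sum_subsetWeight_superset {T : Finset α} (hT : T ⊆ U) :
    ∑ E ∈ U.powerset with T ⊆ E, subsetWeight p U E = p ^ #T := by
  have hcardT : #(U \ T) = #U - #T := card_sdiff_of_subset hT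
  have hTU : #T ≤ #U := card_le_card hT
  have hinj : Set.InjOn (T ∪ ·) (U \ T).powerset := by
    intro E₁ h₁ E₂ h₂ heq
    have h₁ := (subset_sdiff.mp (mem_powerset.mp h₁)).2
    have h₂ := (subset_sdiff.mp (mem_powerset.mp h₂)).2
    simpa [union_sdiff_cancel_left h₁.symm, union_sdiff_cancel_left h₂.symm] using
      congrArg (· \ T) heq
  calc ∑ E ∈ U.powerset with T ⊆ E, subsetWeight p U E
      = ∑ E ∈ (U \ T).powerset, p ^ #T * subsetWeight p (U \ T) E := by
        rw [← Icc_eq_filter_powerset, Icc_eq_image_powerset hT, sum_image hinj]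
        refine sum_congr rfl fun E hE => ?_
        have hE := mem_powerset.mp hE
        have hEcard : #E ≤ #(U \ T) := card_le_card hE
        simp only [subsetWeight]
        rw [card_union_of_disjoint (subset_sdiff.mp hE).2.symm,
          show #U - (#T + #E) = #(U \ T) - #E by omega, pow_add]
        ring
    _ = p ^ #T := by rw [← mul_sum, sum_subsetWeight_powerset, mul_one]

theorem sum_subsetWeight_le_choose_mul_pow {p : ℝ} (hp0 : 0 ≤ p) (hp1 : p ≤ 1) {V : Finset α}
    (hV : V ⊆ U) (t : ℕ) :
    ∑ E ∈ U.powerset with t ≤ #(E ∩ V), subsetWeight p U E ≤ (#V).choose t * p ^ t := by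
  have hsub : {E ∈ U.powerset | t ≤ #(E ∩ V)} ⊆
      {E ∈ U.powerset | ∃ T ∈ V.powersetCard t, T ⊆ E} := by
    intro E hE
    rw [mem_filter] at hE ⊢
    obtain ⟨T, hT, hTcard⟩ := exists_subset_card_eq hE.2
    exact ⟨hE.1, T, mem_powersetCard.mpr ⟨hT.trans inter_subset_right, hTcard⟩,
      hT.trans inter_subset_left⟩
  have hw := subsetWeight_nonneg U hp0 hp1
  calc ∑ E ∈ U.powerset with t ≤ #(E ∩ V), subsetWeight p U E
      ≤ ∑ E ∈ U.powerset with ∃ T ∈ V.powersetCard t, T ⊆ E, subsetWeight p U E :=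
        sum_le_sum_of_subset_of_nonneg hsub fun E _ _ => hw E
    _ ≤ ∑ T ∈ V.powersetCard t, ∑ E ∈ U.powerset with T ⊆ E, subsetWeight p U E :=
        sum_filter_exists_le _ _ (fun E _ => hw E) _ _
    _ = ∑ T ∈ V.powersetCard t, p ^ t := by
        refine sum_congr rfl fun T hT => ?_
        obtain ⟨hTV, hTcard⟩ := mem_powersetCard.mp hT
        rw [sum_subsetWeight_superset p U (hTV.trans hV), hTcard]
    _ = (#V).choose t * p ^ t := by rw [sum_const, card_powersetCard, nsmul_eq_mul]

end SubsetWeight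

section RandomGraph
variable {V : Type*} [DecidableEq V]

theorem exists_adj_fromEdgeSet_of_not_disjoint {s : Finset V} {E : Finset (Sym2 V)}
    (h : ¬ Disjoint (s.offDiag.image Sym2.mk.uncurry) E) :
    ∃ u ∈ s, ∃ v ∈ s, (SimpleGraph.fromEdgeSet (E : Set (Sym2 V))).Adj u v := by
  obtain ⟨e, he, heE⟩ := not_disjoint_iff.mp h
  obtain ⟨⟨u, v⟩, huv, rfl⟩ := mem_image.mp he
  obtain ⟨hu, hv, hne⟩ := mem_offDiag.mp huv
  exact ⟨u, hu, v, hv, (SimpleGraph.fromEdgeSet_adj _).mpr ⟨heE, hne⟩⟩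

theorem ncard_edges_fromEdgeSet_le (E : Finset (Sym2 V)) (W : Finset V) :
    {e ∈ (SimpleGraph.fromEdgeSet (E : Set (Sym2 V))).edgeSet | ∀ v ∈ e, v ∈ W}.ncard ≤
      #(E ∩ W.sym2) := by
  rw [← Set.ncard_coe_finset]
  refine Set.ncard_le_ncard fun e he => ?_
  rw [SimpleGraph.edgeSet_fromEdgeSet] at he
  exact mem_inter.mpr ⟨he.1.1, mem_sym2_iff.mpr he.2⟩

theorem exists_graph_forall_adj_and_ncard_edges_lt [Fintype V] {p : ℝ} (hp0 : 0 ≤ p)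
    (hp1 : p ≤ 1) (n : ℕ) (R : Finset ℕ) (t : ℕ → ℕ)
    (h : ((Fintype.card V).choose n : ℝ) * (1 - p) ^ n.choose 2 +
      ∑ r ∈ R, ((Fintype.card V).choose r : ℝ) * ((r + 1).choose 2).choose (t r) * p ^ t r < 1) :
    ∃ G : SimpleGraph V, (∀ s : Finset V, #s = n → ∃ u ∈ s, ∃ v ∈ s, G.Adj u v) ∧
      ∀ r ∈ R, ∀ W : Finset V, #W = r → {e ∈ G.edgeSet | ∀ v ∈ e, v ∈ W}.ncard < t r := by
  -- Diagonal elements of `E` are harmless: `fromEdgeSet` discards them.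
  let U : Finset (Finset (Sym2 V)) := univ.powerset
  let I := (powersetCard n (univ : Finset V)).disjSum
    (R.sigma fun r => powersetCard r (univ : Finset V))
  let bad : Finset V ⊕ (Σ _ : ℕ, Finset V) → Finset (Finset (Sym2 V)) :=
    Sum.elim (fun s => {E ∈ U | Disjoint (s.offDiag.image Sym2.mk.uncurry) E})
      (fun W => {E ∈ U | t W.1 ≤ #(E ∩ W.2.sym2)})
  have hw := subsetWeight_nonneg (univ : Finset (Sym2 V)) hp0 hp1
  have hsum :
      ∑ i ∈ I, ∑ E ∈ bad i, subsetWeight p univ E < ∑ E ∈ U, subsetWeight p univ E := by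
    refine lt_of_le_of_lt ?_ (h.trans_eq (sum_subsetWeight_powerset p univ).symm)
    rw [sum_disjSum, sum_sigma]
    gcongr with r hr
    · calc _ = ∑ s ∈ powersetCard n (univ : Finset V), (1 - p) ^ n.choose 2 :=
            sum_congr rfl fun s hs => by
              rw [← (mem_powersetCard.mp hs).2, ← Sym2.card_image_offDiag]
              exact sum_subsetWeight_disjoint p univ (subset_univ _)
        _ ≤ _ := by rw [sum_const, card_powersetCard, card_univ, nsmul_eq_mul]
    · calc _ ≤ ∑ W ∈ powersetCard r (univ : Finset V),
              (((r + 1).choose 2).choose (t r) * p ^ t r : ℝ) :=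
            sum_le_sum fun W hW => by
              rw [← (mem_powersetCard.mp hW).2, ← card_sym2]
              exact sum_subsetWeight_le_choose_mul_pow univ hp0 hp1 (subset_univ _) (t #W)
        _ = _ := by rw [sum_const, card_powersetCard, card_univ, nsmul_eq_mul, mul_assoc]
  obtain ⟨E, -, hE⟩ := exists_forall_notMem_of_sum_lt U _ hw I bad hsum
  refine ⟨.fromEdgeSet E, fun s hs => ?_, fun r hr W hW => ?_⟩
  · refine exists_adj_fromEdgeSet_of_not_disjoint fun hdisj => ?_
    exact hE (.inl s) (by simp [I, hs]) (by simp [bad, U, hdisj])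
  · refine (ncard_edges_fromEdgeSet_le E W).trans_lt (not_le.mp fun hle => ?_)
    exact hE (.inr ⟨r, W⟩) (by simp [I, hr, hW]) (by simp [bad, U, hle])

end RandomGraph

-- With `ℓ = log k`, `s = √k`, `x = log n` and `L = log m`, the difference of the two sides is
-- minus the logarithm of `4k · m^r e^(r²) n^(-t/2)`.
theorem sparse_exponent_le {ℓ s x r t L : ℝ} (hℓ : 2 ≤ ℓ) (hs : 64 * ℓ ^ 5 < s)
    (hx : s ^ 2 / 2 ≤ x) (hr : s / (16 * ℓ ^ 2) ≤ r) (hL : L ≤ s / (64 * ℓ ^ 5) * x)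
    (ht : r ^ 2 / ℓ ^ 3 ≤ t) :
    r * L + r ^ 2 + log (4 * s ^ 2) ≤ t * x / 2 := by
  have hℓ0 : 0 < ℓ := by linarith
  have hs0 : 0 < s := lt_of_le_of_lt (by positivity) hs
  have hx0 : 0 ≤ x := le_trans (by positivity) hx
  have hr0 : 0 ≤ r := le_trans (by positivity) hr
  have hmain : r * L ≤ r ^ 2 * x / (4 * ℓ ^ 3) := by
    have hα : s / (64 * ℓ ^ 5) ≤ r / (4 * ℓ ^ 3) := by
      rw [div_le_div_iff₀ (by positivity) (by positivity)]
      rw [div_le_iff₀ (by positivity)] at hr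
      nlinarith [pow_pos hℓ0 3]
    calc r * L ≤ r * (r / (4 * ℓ ^ 3) * x) :=
          mul_le_mul_of_nonneg_left (hL.trans (mul_le_mul_of_nonneg_right hα hx0)) hr0
      _ = r ^ 2 * x / (4 * ℓ ^ 3) := by ring
  have hrest : r ^ 2 + log (4 * s ^ 2) ≤ r ^ 2 * x / (4 * ℓ ^ 3) := by
    have hlog : log (4 * s ^ 2) ≤ 4 * s ^ 2 := by
      linarith [log_le_sub_one_of_pos (by positivity : 0 < 4 * s ^ 2)]
    have hs2 : 4096 * ℓ ^ 10 < s ^ 2 := by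
      nlinarith [pow_lt_pow_left₀ hs (by positivity) two_ne_zero]
    have hs16 : 16 * ℓ ^ 3 ≤ s ^ 2 := by
      nlinarith [pow_le_pow_right₀ (by linarith : 1 ≤ ℓ) (by norm_num : 3 ≤ 10)]
    have hr64 : 64 * ℓ ^ 3 ≤ r ^ 2 := by
      have hr2 : s ^ 2 ≤ 256 * ℓ ^ 4 * r ^ 2 := by
        have := pow_le_pow_left₀ (by positivity) hr 2
        rw [div_pow, div_le_iff₀ (by positivity)] at this
        linarith
      have hℓ3 : 8 ≤ ℓ ^ 3 := by nlinarith [pow_le_pow_left₀ (by norm_num) hℓ 3]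
      have : 16 * ℓ ^ 6 ≤ r ^ 2 := by nlinarith [pow_pos hℓ0 4]
      nlinarith [pow_pos hℓ0 3]
    have hsum : r ^ 2 + 4 * s ^ 2 ≤ r ^ 2 * (s ^ 2 / 2) / (4 * ℓ ^ 3) := by
      rw [le_div_iff₀ (by positivity)]
      nlinarith [mul_le_mul_of_nonneg_left hs16 (sq_nonneg r),
        mul_le_mul_of_nonneg_left hr64 (sq_nonneg s)]
    have hx' : r ^ 2 * (s ^ 2 / 2) / (4 * ℓ ^ 3) ≤ r ^ 2 * x / (4 * ℓ ^ 3) := by gcongr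
    linarith
  have htail : 2 * (r ^ 2 * x / (4 * ℓ ^ 3)) ≤ t * x / 2 :=
    calc 2 * (r ^ 2 * x / (4 * ℓ ^ 3)) = r ^ 2 / ℓ ^ 3 * x / 2 := by ring
      _ ≤ t * x / 2 := by gcongr
  linarith

-- Here `x = log n`, and the right side is `p * (n choose 2)` for `p = n^{-1/2}`.
theorem indep_exponent_le {x L : ℝ} (hx : 2048 ≤ x) (hL : L ≤ 2 * x ^ 2) :
    exp x * L + log 4 ≤ exp (-x / 2) * (exp x * (exp x - 1) / 2) := by
  have hcube : 8 * x ^ 2 + 8 ≤ exp (x / 2) := by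
    have := pow_div_factorial_le_exp (x := x / 2) (by linarith) 3
    norm_num [Nat.factorial] at this
    nlinarith
  have hN : 2 ≤ exp x := by linarith [add_one_le_exp x]
  have hlog4 : log 4 ≤ 3 := by linarith [log_le_sub_one_of_pos (by norm_num : (0 : ℝ) < 4)]
  have hsplit : exp (-x / 2) * exp x = exp (x / 2) := by rw [← exp_add]; ring_nf
  calc exp x * L + log 4 ≤ exp x * (2 * x ^ 2) + 2 * exp x := by gcongr; linarith
    _ = exp x * (8 * x ^ 2 + 8) / 4 := by ring
    _ ≤ exp x * exp (x / 2) / 4 := by gcongr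
    _ ≤ exp (x / 2) * (exp x - 1) / 2 := by nlinarith [exp_pos (x / 2)]
    _ = exp (-x / 2) * (exp x * (exp x - 1) / 2) := by rw [← hsplit]; ring

theorem natCast_choose_le_exp {m : ℕ} (hm : 0 < m) (r : ℕ) :
    (m.choose r : ℝ) ≤ exp (r * log m) := by
  rw [exp_nat_mul, exp_log (by positivity)]
  exact_mod_cast Nat.choose_le_pow m r

theorem choose_mul_one_sub_pow_le {n m : ℕ} {x : ℝ} (hx : 2048 ≤ x) (hn : exp x = n)
    (hm : 0 < m) (hlogm : log m ≤ 2 * x ^ 2) :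
    (m.choose n : ℝ) * (1 - exp (-x / 2)) ^ n.choose 2 ≤ 1 / 4 := by
  have hp1 : exp (-x / 2) ≤ 1 := exp_le_one_iff.mpr (by linarith)
  have hpow : (1 - exp (-x / 2)) ^ n.choose 2 ≤ exp (n.choose 2 * -exp (-x / 2)) := by
    rw [exp_nat_mul]
    exact pow_le_pow_left₀ (by linarith) (by linarith [add_one_le_exp (-exp (-x / 2))]) _
  have hexp := indep_exponent_le hx hlogm
  rw [hn, ← Nat.cast_choose_two] at hexp
  calc (m.choose n : ℝ) * (1 - exp (-x / 2)) ^ n.choose 2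
      ≤ exp (n * log m) * exp (n.choose 2 * -exp (-x / 2)) :=
        mul_le_mul (natCast_choose_le_exp hm n) hpow (by positivity) (exp_pos _).le
    _ ≤ exp (-log 4) := by rw [← exp_add]; gcongr; linarith
    _ = 1 / 4 := by rw [exp_neg, exp_log (by norm_num), one_div]

theorem choose_add_one_two_le_sq (r : ℕ) : (r + 1).choose 2 ≤ r ^ 2 := by
  rw [Nat.choose_two_right]
  exact Nat.div_le_of_le_mul (by simp only [Nat.add_sub_cancel]; nlinarith)

theorem choose_mul_choose_mul_pow_le {k m r t : ℕ} {x : ℝ} (hℓ : 2 ≤ log k)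
    (hk : 64 * log k ^ 5 < √k) (hx : k / 2 ≤ x) (hm : 0 < m)
    (hlogm : log m ≤ √k / (64 * log k ^ 5) * x) (hr : √k / (16 * log k ^ 2) ≤ r)
    (ht : r ^ 2 / log k ^ 3 ≤ t) :
    (m.choose r : ℝ) * ((r + 1).choose 2).choose t * exp (-x / 2) ^ t ≤ 1 / (4 * k) := by
  have hsq : √k ^ 2 = k := sq_sqrt (Nat.cast_nonneg k)
  have hexp := sparse_exponent_le hℓ hk (by rwa [hsq]) hr hlogm ht
  rw [hsq] at hexp
  have hk0 : (0 : ℝ) < k := sqrt_pos.mp (lt_of_le_of_lt (by positivity) hk)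
  have hpairs : ((((r + 1).choose 2).choose t : ℕ) : ℝ) ≤ exp (r ^ 2) := by
    calc ((((r + 1).choose 2).choose t : ℕ) : ℝ) ≤ (2 : ℝ) ^ (r ^ 2) := by
          exact_mod_cast (Nat.choose_le_two_pow _ _).trans
            (Nat.pow_le_pow_right two_pos (choose_add_one_two_le_sq r))
      _ ≤ exp 1 ^ (r ^ 2) := by gcongr; linarith [add_one_le_exp 1]
      _ = exp (r ^ 2) := by rw [← exp_nat_mul]; push_cast; ring_nf
  calc (m.choose r : ℝ) * ((r + 1).choose 2).choose t * exp (-x / 2) ^ t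
      ≤ exp (r * log m) * exp (r ^ 2) * exp (t * (-x / 2)) := by
        rw [exp_nat_mul (-x / 2) t]
        gcongr
        exact natCast_choose_le_exp hm r
    _ ≤ exp (-log (4 * k)) := by rw [← exp_add, ← exp_add]; gcongr; linarith
    _ = 1 / (4 * k) := by rw [exp_neg, exp_log (by positivity), one_div]

theorem one_lt_log_natCast {n : ℕ} (hn : 3 ≤ n) : 1 < log n := by
  rw [lt_log_iff_exp_lt (by positivity)]
  have : (3 : ℝ) ≤ n := by exact_mod_cast hn
  linarith [exp_one_lt_d9]

theorem one_lt_of_le_div_log_rpow {n : ℕ} {α : ℝ} (hn : 3 ≤ n)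
    (h : (n : ℝ) ≤ (n / log n) ^ α) : 1 < α := by
  have hlog := one_lt_log_natCast hn
  have hn0 : (0 : ℝ) < n := by positivity
  have hdiv : n / log n < n := div_lt_self hn0 hlog
  by_contra! hα
  have hone : 1 ≤ (n : ℝ) / log n := by
    rw [le_div_iff₀ (by linarith)]
    linarith [log_le_sub_one_of_pos hn0]
  have := rpow_le_rpow_of_exponent_le hone hα
  rw [rpow_one] at this
  linarith

theorem log_le_mul_log_of_le_div_log_rpow {n m : ℕ} {α : ℝ} (hn : 3 ≤ n) (hm : 0 < m)
    (hα : 0 ≤ α) (h : (m : ℝ) ≤ (n / log n) ^ α) : log m ≤ α * log n := by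
  have hlog := one_lt_log_natCast hn
  have hpos : (0 : ℝ) < n / log n := by positivity
  calc log m ≤ log ((n / log n) ^ α) := log_le_log (by positivity) h
    _ = α * log (n / log n) := log_rpow hpos α
    _ ≤ α * log n := by
        gcongr
        exact div_le_self (by positivity) hlog.le

theorem half_le_log_of_two_pow_lt {k n : ℕ} (h : 2 ^ k < n) : (k : ℝ) / 2 ≤ log n := by
  have hlt : (k : ℝ) * log 2 < log n := by
    rw [← log_pow]
    exact log_lt_log (by positivity) (by exact_mod_cast h)
  nlinarith [log_two_gt_d9, (Nat.cast_nonneg k : (0 : ℝ) ≤ k)]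

theorem lt_natCast_of_log_pow_five_lt_sqrt {k : ℕ} (hk : 3 ≤ k) (h : 64 * log k ^ 5 < √k) :
    4096 < (k : ℝ) := by
  have hℓ : 1 ≤ log k ^ 5 := one_le_pow₀ (one_lt_log_natCast hk).le
  have h64 : 64 < √k := by linarith
  rw [lt_sqrt (by norm_num)] at h64
  linarith

theorem two_le_log_of_log_pow_five_lt_sqrt {k : ℕ} (hk : 3 ≤ k) (h : 64 * log k ^ 5 < √k) :
    2 ≤ log k := by
  have hk' := lt_natCast_of_log_pow_five_lt_sqrt hk h
  rw [le_log_iff_exp_le (by linarith), show (2 : ℝ) = 1 + 1 by norm_num, exp_add]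
  nlinarith [exp_one_lt_d9, exp_pos 1]

theorem expected_bad_count_lt_one {k n m : ℕ} (hk : 3 ≤ k) (hn : 2 ^ k < n) (hnm : n ≤ m)
    (hm : (m : ℝ) ≤ ((n : ℝ) / log n) ^ (√k / (64 * log k ^ 5))) :
    (m.choose n : ℝ) * (1 - exp (-log n / 2)) ^ n.choose 2 +
      ∑ r ∈ range (k + 1) with √k / (16 * log k ^ 2) ≤ ((r : ℕ) : ℝ),
        (m.choose r : ℝ) * ((r + 1).choose 2).choose ⌈(r : ℝ) ^ 2 / log k ^ 3⌉₊ *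
          exp (-log n / 2) ^ ⌈(r : ℝ) ^ 2 / log k ^ 3⌉₊ < 1 := by
  have hn3 : 3 ≤ n := by
    have : 2 ^ 3 ≤ 2 ^ k := Nat.pow_le_pow_right two_pos hk
    omega
  have hm0 : 0 < m := by omega
  have hℓ0 : 0 < log k := (one_lt_log_natCast hk).trans' one_pos
  have hα : 64 * log k ^ 5 < √k := (one_lt_div (by positivity)).mp
    (one_lt_of_le_div_log_rpow hn3 ((Nat.cast_le.mpr hnm).trans hm))
  have hℓ := two_le_log_of_log_pow_five_lt_sqrt hk hα
  have hk4096 := lt_natCast_of_log_pow_five_lt_sqrt hk hα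
  have hx := half_le_log_of_two_pow_lt hn
  have hlogm := log_le_mul_log_of_le_div_log_rpow hn3 hm0 (by positivity) hm
  have hlogm' : log m ≤ 2 * log n ^ 2 := by
    have hαk : √k / (64 * log k ^ 5) ≤ k :=
      calc √k / (64 * log k ^ 5) ≤ √k := div_le_self (sqrt_nonneg _)
            (by nlinarith [one_le_pow₀ (n := 5) (hℓ.trans' one_le_two)])
        _ ≤ k := sqrt_le_self_iff.mpr (Or.inr (by linarith))
    nlinarith
  calc _ ≤ 1 / 4 + ∑ r ∈ range (k + 1) with √k / (16 * log k ^ 2) ≤ ((r : ℕ) : ℝ),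
        1 / (4 * (k : ℝ)) := by
        gcongr with r hr
        · exact choose_mul_one_sub_pow_le (by linarith) (exp_log (by positivity)) hm0 hlogm'
        · exact choose_mul_choose_mul_pow_le hℓ hα hx hm0 hlogm (mem_filter.mp hr).2
            (Nat.le_ceil _)
    _ ≤ 1 / 4 + (k + 1) * (1 / (4 * k)) := by
        rw [sum_const, nsmul_eq_mul]
        gcongr
        exact_mod_cast (card_filter_le _ _).trans (card_range _).le
    _ < 1 := by
        have : (k + 1) * (1 / (4 * k)) ≤ (1 / 2 : ℝ) := by
          rw [mul_one_div, div_le_iff₀ (by positivity)]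
          linarith
        linarith

/-- For every `k ≥ 3` there is `c > 0` such that for every `n > 2^k` there
is a graph `G` on `m = ⌊c (n / log n)^{√k/(64 (log k)^5)}⌋` vertices with no independent set
of size `n`, in which every set of `r` vertices, for every `√k/(16 (log k)²) ≤ r ≤ k`,
induces fewer than `r²/(log k)³` edges. -/
theorem exists_sparse_low_independence_graph (k : ℕ) (hk : 3 ≤ k) :
    ∃ c : ℝ, c > 0 ∧ ∀ n : ℕ, 2 ^ k < n →
      ∀ m : ℕ,
        m = ⌊c * ((n : ℝ) / Real.log n) ^ (Real.sqrt k / (64 * Real.log k ^ 5))⌋₊ →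
        ∃ G : SimpleGraph (Fin m),
          (∀ s : Finset (Fin m), s.card = n → ∃ u ∈ s, ∃ v ∈ s, G.Adj u v) ∧
          (∀ r : ℕ, Real.sqrt k / (16 * Real.log k ^ 2) ≤ (r : ℝ) → r ≤ k →
            ∀ W : Finset (Fin m), W.card = r →
              (Set.ncard {e ∈ G.edgeSet | ∀ v ∈ e, v ∈ W} : ℝ) <
                (r : ℝ) ^ 2 / Real.log k ^ 3) := by
  refine ⟨1, one_pos, fun n hn m hm => ?_⟩
  have hℓ0 : 0 < log k := (one_lt_log_natCast hk).trans' one_pos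
  rcases le_or_gt n m with hnm | hmn
  · have hm' : (m : ℝ) ≤ ((n : ℝ) / log n) ^ (√k / (64 * log k ^ 5)) := by
      rw [hm, one_mul]
      exact Nat.floor_le (rpow_nonneg (div_nonneg n.cast_nonneg (log_natCast_nonneg n)) _)
    obtain ⟨G, hind, hsparse⟩ := exists_graph_forall_adj_and_ncard_edges_lt (V := Fin m)
      (p := exp (-log n / 2)) (exp_pos _).le
      (exp_le_one_iff.mpr (by linarith [log_natCast_nonneg n])) n
      {r ∈ range (k + 1) | √k / (16 * log k ^ 2) ≤ (r : ℝ)}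
      (fun r => ⌈(r : ℝ) ^ 2 / log k ^ 3⌉₊)
      (by rw [Fintype.card_fin]; exact expected_bad_count_lt_one hk hn hnm hm')
    refine ⟨G, hind, fun r hr hrk W hW => Nat.lt_ceil.mp (hsparse r ?_ W hW)⟩
    simp [hr, Nat.lt_succ_of_le hrk]
  · refine ⟨⊥, fun s hs => absurd (hs ▸ card_le_univ s) (by simpa using hmn),
      fun r hr _ W _ => ?_⟩
    have hr0 : (0 : ℝ) < r := hr.trans_lt' (by positivity)
    simpa using div_pos (pow_pos hr0 2) (pow_pos hℓ0 3)
end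

section
/- Let m ≥ 1 and s, t ≥ 3 be integers and let A ⊆ {0, 1, ..., 2^m − 1}. If A contains no δ-increasing set of order s and no δ-decreasing set of order t, then |A| ≤ C(s + t − 4, t − 2), where C(·,·) denotes the binomial coefficient. -/
/-!
Split `A ⊆ [0, 2^(n+1))` into its lower half `L = A ∩ [0, 2^n)` and its upper half
`U = A ∩ [2^n, 2^(n+1))`. Every pair with one element in each half has `δ = n`, which exceeds `δ`
of any pair inside one half, and translating `U` down by `2^n` preserves `δ`. Hence an element of
`U` extends every δ-increasing chain of `L` at the top, and an element of `L` extends every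
δ-decreasing chain of `U` at the bottom. When both halves are nonempty, induction on `n` bounds
`|L|` with `s` lowered by one and `|U|` with `t` lowered by one, and Pascal's rule adds the bounds.
-/

/-- `δ(u,v)`: the largest index `i` at which the binary expansions of `u` and `v` differ. -/
noncomputable def bitDelta (u v : ℕ) : ℕ := sSup {i : ℕ | u.testBit i ≠ v.testBit i}

/-- `A` contains a δ-increasing set of order `s`: elements `v₁ < v₂ < ⋯ < v_s` of `A` with
`δ(v₁,v₂) < δ(v₂,v₃) < ⋯ < δ(v_{s-1},v_s)`. -/
def HasDeltaIncreasing (A : Finset ℕ) (s : ℕ) : Prop :=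
  ∃ v : ℕ → ℕ, (∀ i, i < s → v i ∈ A) ∧ (∀ i, i + 1 < s → v i < v (i + 1)) ∧
    ∀ i, i + 2 < s → bitDelta (v i) (v (i + 1)) < bitDelta (v (i + 1)) (v (i + 2))

/-- `A` contains a δ-decreasing set of order `t`: elements `v₁ < v₂ < ⋯ < v_t` of `A` with
`δ(v₁,v₂) > δ(v₂,v₃) > ⋯ > δ(v_{t-1},v_t)`. -/
def HasDeltaDecreasing (A : Finset ℕ) (t : ℕ) : Prop :=
  ∃ v : ℕ → ℕ, (∀ i, i < t → v i ∈ A) ∧ (∀ i, i + 1 < t → v i < v (i + 1)) ∧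
    ∀ i, i + 2 < t → bitDelta (v (i + 1)) (v (i + 2)) < bitDelta (v i) (v (i + 1))

open Finset

theorem Nat.two_pow_add_eq_xor {n u : ℕ} (hu : u < 2 ^ n) : 2 ^ n + u = 2 ^ n ^^^ u := by
  refine Nat.eq_of_testBit_eq fun i => ?_
  rw [Nat.testBit_xor, Nat.testBit_two_pow]
  rcases lt_trichotomy n i with hni | rfl | hin
  · have hlt : 2 ^ n + u < 2 ^ i :=
      calc 2 ^ n + u < 2 ^ (n + 1) := by rw [pow_succ]; omega
        _ ≤ 2 ^ i := Nat.pow_le_pow_right two_pos hni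
    simp [Nat.testBit_lt_two_pow hlt, Nat.testBit_lt_two_pow ((Nat.le_add_left u _).trans_lt hlt),
      hni.ne]
  · simp [Nat.testBit_two_pow_add_eq, Nat.testBit_lt_two_pow hu]
  · simp [Nat.testBit_two_pow_add_gt hin, hin.ne']

/-- Also for `u = v`: both sides are then `0`, as `sSup ∅ = 0`. -/
theorem bitDelta_eq_log2_xor (u v : ℕ) : bitDelta u v = (u ^^^ v).log2 := by
  have hS : {i | u.testBit i ≠ v.testBit i} = {i | (u ^^^ v).testBit i} := by
    ext i; simp [Nat.testBit_xor]
  rw [bitDelta, hS]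
  rcases eq_or_ne (u ^^^ v) 0 with h | h
  · simp [h]
  · refine IsGreatest.csSup_eq ⟨Nat.testBit_log2 h, fun i hi => ?_⟩
    by_contra! hlt
    rw [Set.mem_ofPred_eq, Nat.testBit_lt_two_pow ((Nat.log2_lt h).1 hlt)] at hi
    exact Bool.false_ne_true hi

theorem bitDelta_two_pow_add {n u v : ℕ} (hu : u < 2 ^ n) (hv : v < 2 ^ n) :
    bitDelta (2 ^ n + u) (2 ^ n + v) = bitDelta u v := by
  rw [bitDelta_eq_log2_xor, bitDelta_eq_log2_xor, Nat.two_pow_add_eq_xor hu,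
    Nat.two_pow_add_eq_xor hv, Nat.xor_comm _ u, Nat.xor_assoc, Nat.xor_xor_cancel_left]

theorem bitDelta_lt_of_lt_two_pow {n u v : ℕ} (huv : u ≠ v) (hu : u < 2 ^ n) (hv : v < 2 ^ n) :
    bitDelta u v < n := by
  rw [bitDelta_eq_log2_xor, Nat.log2_lt (Nat.xor_eq_zero_iff.not.2 huv)]
  exact Nat.xor_lt_two_pow hu hv

theorem bitDelta_two_pow_add_right {n u v : ℕ} (hu : u < 2 ^ n) (hv : v < 2 ^ n) :
    bitDelta u (2 ^ n + v) = n := by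
  have hw := Nat.xor_lt_two_pow hu hv
  rw [bitDelta_eq_log2_xor, Nat.two_pow_add_eq_xor hv, Nat.xor_left_comm,
    ← Nat.two_pow_add_eq_xor hw, Nat.log2_eq_iff (by positivity), pow_succ]
  omega

/-- `HasDeltaIncreasing A s` and `HasDeltaDecreasing A t` unfold to `HasDeltaChain (· < ·) A s`
and `HasDeltaChain (· > ·) A t`. -/
def HasDeltaChain (r : ℕ → ℕ → Prop) (A : Finset ℕ) (k : ℕ) : Prop :=
  ∃ v : ℕ → ℕ, (∀ i, i < k → v i ∈ A) ∧ (∀ i, i + 1 < k → v i < v (i + 1)) ∧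
    ∀ i, i + 2 < k → r (bitDelta (v i) (v (i + 1))) (bitDelta (v (i + 1)) (v (i + 2)))

def lowerHalf (n : ℕ) (A : Finset ℕ) : Finset ℕ := {x ∈ range (2 ^ n) | x ∈ A}

def upperHalf (n : ℕ) (A : Finset ℕ) : Finset ℕ := {x ∈ range (2 ^ n) | 2 ^ n + x ∈ A}

section Halves

variable {n : ℕ} {A : Finset ℕ} {x : ℕ}

@[simp]
theorem mem_lowerHalf : x ∈ lowerHalf n A ↔ x < 2 ^ n ∧ x ∈ A := by
  simp [lowerHalf]

@[simp]
theorem mem_upperHalf : x ∈ upperHalf n A ↔ x < 2 ^ n ∧ 2 ^ n + x ∈ A := by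
  simp [upperHalf]

theorem lowerHalf_subset_range : lowerHalf n A ⊆ range (2 ^ n) := filter_subset _ _

theorem upperHalf_subset_range : upperHalf n A ⊆ range (2 ^ n) := filter_subset _ _

theorem lowerHalf_subset : lowerHalf n A ⊆ A := fun _ hx => (mem_lowerHalf.1 hx).2

theorem card_eq_card_lowerHalf_add_card_upperHalf (hA : A ⊆ range (2 ^ (n + 1))) :
    #A = #(lowerHalf n A) + #(upperHalf n A) := by
  have hlower : lowerHalf n A = {x ∈ A | x < 2 ^ n} := by
    ext x; simp [and_comm]
  have hupper : #(upperHalf n A) = #{x ∈ A | ¬x < 2 ^ n} := by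
    refine card_nbij' (2 ^ n + ·) (· - 2 ^ n) ?_ ?_ ?_ ?_
    · intro x hx
      rw [mem_coe, mem_upperHalf] at hx
      simp [hx.2]
    · intro x hx
      rw [mem_coe, mem_filter, not_lt] at hx
      have := mem_range.1 (hA hx.1)
      rw [pow_succ] at this
      rw [mem_coe, mem_upperHalf, Nat.add_sub_cancel' hx.2]
      exact ⟨Nat.sub_lt_left_of_lt_add hx.2 (by omega), hx.1⟩
    · intro x _
      simp
    · intro x hx
      rw [mem_coe, mem_filter, not_lt] at hx
      exact Nat.add_sub_cancel' hx.2
  rw [hlower, hupper, card_filter_add_card_filter_not]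

end Halves

namespace HasDeltaChain

variable {r : ℕ → ℕ → Prop} {n k : ℕ} {A B : Finset ℕ}

theorem mono (hAB : A ⊆ B) (h : HasDeltaChain r A k) : HasDeltaChain r B k :=
  let ⟨v, hmem, hlt, hr⟩ := h
  ⟨v, fun i hi => hAB (hmem i hi), hlt, hr⟩

theorem of_upperHalf (h : HasDeltaChain r (upperHalf n A) k) : HasDeltaChain r A k := by
  obtain ⟨v, hmem, hlt, hr⟩ := h
  have hv (i) (hi : i < k) : v i < 2 ^ n := (mem_upperHalf.1 (hmem i hi)).1
  refine ⟨fun i => 2 ^ n + v i, fun i hi => (mem_upperHalf.1 (hmem i hi)).2,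
    fun i hi => Nat.add_lt_add_left (hlt i hi) _, fun i hi => ?_⟩
  rw [bitDelta_two_pow_add (hv i (by omega)) (hv (i + 1) (by omega)),
    bitDelta_two_pow_add (hv (i + 1) (by omega)) (hv (i + 2) (by omega))]
  exact hr i hi

theorem snoc_upperHalf {y : ℕ} (h : HasDeltaChain (· < ·) (lowerHalf n A) k)
    (hy : y ∈ upperHalf n A) : HasDeltaChain (· < ·) A (k + 1) := by
  obtain ⟨v, hmem, hlt, hr⟩ := h
  have hv (i) (hi : i < k) : v i < 2 ^ n := (mem_lowerHalf.1 (hmem i hi)).1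
  rw [mem_upperHalf] at hy
  refine ⟨fun i => if i < k then v i else 2 ^ n + y, fun i hi => ?_, fun i hi => ?_,
    fun i hi => ?_⟩
  · dsimp only
    split_ifs with hik
    exacts [lowerHalf_subset (hmem i hik), hy.2]
  · by_cases hik : i + 1 < k
    · simpa [hik, show i < k by omega] using hlt i hik
    · simp only [show i < k by omega, hik, if_true, if_false]
      exact (hv i (by omega)).trans_le (Nat.le_add_right _ _)
  · by_cases hik : i + 2 < k
    · simpa [hik, show i < k by omega, show i + 1 < k by omega] using hr i hik
    · simp only [show i < k by omega, show i + 1 < k by omega, hik, if_true, if_false]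
      rw [bitDelta_two_pow_add_right (hv (i + 1) (by omega)) hy.1]
      exact bitDelta_lt_of_lt_two_pow (hlt i (by omega)).ne (hv i (by omega))
        (hv (i + 1) (by omega))

theorem cons_lowerHalf {x : ℕ} (h : HasDeltaChain (· > ·) (upperHalf n A) k)
    (hx : x ∈ lowerHalf n A) : HasDeltaChain (· > ·) A (k + 1) := by
  obtain ⟨v, hmem, hlt, hr⟩ := h
  have hv (i) (hi : i < k) : v i < 2 ^ n := (mem_upperHalf.1 (hmem i hi)).1
  rw [mem_lowerHalf] at hx
  refine ⟨fun | 0 => x | i + 1 => 2 ^ n + v i, ?_, ?_, ?_⟩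
  · rintro (_ | i) hi
    exacts [hx.2, (mem_upperHalf.1 (hmem i (by omega))).2]
  · rintro (_ | i) hi
    exacts [hx.1.trans_le (Nat.le_add_right _ _), Nat.add_lt_add_left (hlt i (by omega)) _]
  · rintro (_ | i) hi
    · show bitDelta (2 ^ n + v 0) (2 ^ n + v 1) < bitDelta x (2 ^ n + v 0)
      rw [bitDelta_two_pow_add (hv 0 (by omega)) (hv 1 (by omega)),
        bitDelta_two_pow_add_right hx.1 (hv 0 (by omega))]
      exact bitDelta_lt_of_lt_two_pow (hlt 0 (by omega)).ne (hv 0 (by omega)) (hv 1 (by omega))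
    · show bitDelta (2 ^ n + v (i + 1)) (2 ^ n + v (i + 2)) <
        bitDelta (2 ^ n + v i) (2 ^ n + v (i + 1))
      rw [bitDelta_two_pow_add (hv i (by omega)) (hv (i + 1) (by omega)),
        bitDelta_two_pow_add (hv (i + 1) (by omega)) (hv (i + 2) (by omega))]
      exact hr i (by omega)

end HasDeltaChain

theorem card_le_one_of_not_hasDeltaChain_two {r : ℕ → ℕ → Prop} {A : Finset ℕ}
    (h : ¬HasDeltaChain r A 2) : #A ≤ 1 := by
  rw [card_le_one]
  intro a ha b hb
  by_contra hab
  wlog hlt : a < b generalizing a b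
  · exact this b hb a ha (Ne.symm hab) ((not_lt.1 hlt).lt_of_ne' hab)
  refine h ⟨fun i => if i = 0 then a else b, ?_, ?_, by omega⟩
  · intro i hi
    dsimp only
    split_ifs <;> assumption
  · intro i hi
    simpa [show i = 0 by omega] using hlt

theorem card_le_choose_of_subset_range {m s t : ℕ} {A : Finset ℕ} (hA : A ⊆ range (2 ^ m))
    (hinc : ¬HasDeltaChain (· < ·) A (s + 2)) (hdec : ¬HasDeltaChain (· > ·) A (t + 2)) :
    #A ≤ (s + t).choose t := by
  induction m generalizing s t A with
  | zero => exact (by simpa using card_le_card hA : #A ≤ 1).trans (Nat.choose_pos (by omega))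
  | succ n ih =>
    rcases s with _ | s
    · exact (card_le_one_of_not_hasDeltaChain_two hinc).trans (Nat.choose_pos (by omega))
    rcases t with _ | t
    · exact (card_le_one_of_not_hasDeltaChain_two hdec).trans (Nat.choose_pos (by omega))
    rw [card_eq_card_lowerHalf_add_card_upperHalf hA]
    rcases (upperHalf n A).eq_empty_or_nonempty with hU | ⟨y, hy⟩
    · rw [hU, card_empty, add_zero]
      exact ih lowerHalf_subset_range (fun h => hinc (h.mono lowerHalf_subset))
        (fun h => hdec (h.mono lowerHalf_subset))
    rcases (lowerHalf n A).eq_empty_or_nonempty with hL | ⟨x, hx⟩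
    · rw [hL, card_empty, zero_add]
      exact ih upperHalf_subset_range (fun h => hinc h.of_upperHalf)
        (fun h => hdec h.of_upperHalf)
    have hlower : #(lowerHalf n A) ≤ (s + t + 1).choose (t + 1) :=
      ih lowerHalf_subset_range (fun h => hinc (h.snoc_upperHalf hy))
        (fun h => hdec (h.mono lowerHalf_subset))
    have hupper : #(upperHalf n A) ≤ (s + 1 + t).choose t :=
      ih upperHalf_subset_range (fun h => hinc h.of_upperHalf)
        (fun h => hdec (h.cons_lowerHalf hx))
    calc #(lowerHalf n A) + #(upperHalf n A)
        ≤ (s + t + 1).choose (t + 1) + (s + t + 1).choose t :=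
          add_le_add hlower (by rwa [add_right_comm] at hupper)
      _ = (s + 1 + (t + 1)).choose (t + 1) := by
        rw [add_comm, ← Nat.choose_succ_succ']; congr 1; omega

theorem card_le_of_no_delta_monotone_general (m s t : ℕ) (hs : 3 ≤ s) (ht : 3 ≤ t)
    (A : Finset ℕ) (hA : A ⊆ Finset.range (2 ^ m))
    (hinc : ¬ HasDeltaIncreasing A s) (hdec : ¬ HasDeltaDecreasing A t) :
    A.card ≤ Nat.choose (s + t - 4) (t - 2) := by
  obtain ⟨s, rfl⟩ : ∃ s', s = s' + 2 := ⟨s - 2, by omega⟩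
  obtain ⟨t, rfl⟩ : ∃ t', t = t' + 2 := ⟨t - 2, by omega⟩
  rw [show s + 2 + (t + 2) - 4 = s + t by omega, Nat.add_sub_cancel]
  exact card_le_choose_of_subset_range hA hinc hdec

/-- If `A ⊆ {0, …, 2^m − 1}` contains no δ-increasing set of order `s` and
no δ-decreasing set of order `t`, then `|A| ≤ C(s + t − 4, t − 2)`. -/
theorem card_le_of_no_delta_monotone (m s t : ℕ) (hm : 1 ≤ m) (hs : 3 ≤ s) (ht : 3 ≤ t)
    (A : Finset ℕ) (hA : A ⊆ Finset.range (2 ^ m))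
    (hinc : ¬ HasDeltaIncreasing A s) (hdec : ¬ HasDeltaDecreasing A t) :
    A.card ≤ Nat.choose (s + t - 4) (t - 2) :=
  card_le_of_no_delta_monotone_general m s t hs ht A hA hinc hdec
end

section
/- There is an absolute constant C > 0 such that for all integers n ≥ 1, p ≥ 2 and N ≥ 2^{C n log p} (log denotes the natural logarithm), the following holds: for every function f mapping the 2-element subsets of {1,...,N} to [p] = {1,...,p} and every function g : [p]^3 → {red, blue}, the coloring χ of the 3-element subsets of {1,...,N} defined by χ({i,j,k}) = g(f({i,j}), f({j,k}), f({i,k})) for i < j < k contains a monochromatic copy of K_{n,n,n}^(3). -/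
/-!
Split `{0, …, N - 1}` into three consecutive blocks `X < Y < Z` of size `M = n (2p)^(3n+3)`, so
that every crossing triple `i < j < k` has `i ∈ X`, `j ∈ Y`, `k ∈ Z`. A Kővári–Sós–Turán double
count gives `K₁ ⊆ Z` of size `2n` and `X₁ ⊆ X` of size `2np` with `f` constant on `X₁ × K₁`, and
then `I ⊆ X₁` of size `n` and `J₀ ⊆ Y` of size `n p^(2n)` with `f` constant on `I × J₀`.
Shrinking `J₀` by a factor `p` for each element of `K₁`, we reach `J` of size `n` on which
`f {j, k}` depends only on `k`. The colour of a crossing triple is then a function of `k` alone,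
and the larger of its two colour classes in `K₁` has at least `n` elements.
-/

open Finset

namespace PairConstruction

variable {α β γ : Type*}

theorem exists_subset_card_eq_forall_eq {s : Finset α} {t : Finset β}
    {f : α → β} {n : ℕ} (hf : ∀ x ∈ s, f x ∈ t) (ht : t.Nonempty) (hn : #t * n ≤ #s) :
    ∃ y ∈ t, ∃ s' ⊆ s, #s' = n ∧ ∀ x ∈ s', f x = y := by
  classical
  obtain ⟨y, hy, hfiber⟩ := exists_le_card_fiber_of_mul_le_card_of_maps_to hf ht hn
  obtain ⟨s', hs', rfl⟩ := exists_subset_card_eq hfiber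
  exact ⟨y, hy, s', hs'.trans (filter_subset _ _), rfl, fun x hx => (mem_filter.1 (hs' hx)).2⟩

theorem exists_subset_forall_eq_of_pow_mul_le_card {T : Finset γ} (hT : T.Nonempty)
    (c : α → β → γ) (K : Finset β) :
    ∀ {Y : Finset α} {m : ℕ}, (∀ y ∈ Y, ∀ k ∈ K, c y k ∈ T) → #T ^ #K * m ≤ #Y →
      ∃ J ⊆ Y, #J = m ∧ ∃ d : β → γ, ∀ y ∈ J, ∀ k ∈ K, c y k = d k := by
  classical
  induction K using Finset.induction_on with
  | empty =>
    intro Y m _ hm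
    obtain ⟨J, hJY, hJ⟩ := exists_subset_card_eq (by simpa using hm)
    obtain ⟨t, -⟩ := hT
    exact ⟨J, hJY, hJ, fun _ => t, by simp⟩
  | @insert k₀ K hk₀ ih =>
    intro Y m hc hm
    obtain ⟨J₁, hJ₁Y, hJ₁, d, hd⟩ := ih (m := #T * m)
      (fun y hy k hk => hc y hy k (mem_insert_of_mem hk))
      (by rw [card_insert_of_notMem hk₀, pow_succ] at hm; linarith)
    obtain ⟨a, -, J, hJJ₁, hJ, ha⟩ := exists_subset_card_eq_forall_eq (f := (c · k₀))
      (fun y hy => hc y (hJ₁Y hy) k₀ (mem_insert_self _ _)) hT hJ₁.ge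
    refine ⟨J, hJJ₁.trans hJ₁Y, hJ, Function.update d k₀ a, fun y hy k hk => ?_⟩
    obtain rfl | hk := mem_insert.1 hk
    · simpa using ha y hy
    · rw [Function.update_of_ne (ne_of_mem_of_not_mem hk hk₀)]
      exact hd y (hJJ₁ hy) k hk

theorem _root_.Nat.choose_mul_two_mul_le (p s : ℕ) :
    (p * (2 * s)).choose s ≤ (2 * p) ^ s * (2 * s).choose s := by
  refine Nat.le_of_mul_le_mul_left ?_ s.factorial_pos
  calc s.factorial * (p * (2 * s)).choose s = (p * (2 * s)).descFactorial s :=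
        (Nat.descFactorial_eq_factorial_mul_choose _ _).symm
    _ ≤ (p * (2 * s)) ^ s := Nat.descFactorial_le_pow _ _
    _ = (2 * p) ^ s * s ^ s := by ring
    _ ≤ (2 * p) ^ s * (2 * s + 1 - s) ^ s := by gcongr; omega
    _ ≤ (2 * p) ^ s * (2 * s).descFactorial s := by gcongr; exact Nat.pow_sub_le_descFactorial _ _
    _ = s.factorial * ((2 * p) ^ s * (2 * s).choose s) := by
        rw [Nat.descFactorial_eq_factorial_mul_choose]; ring

theorem exists_mem_powersetCard_card_mul_choose_le (A : Finset α) (B : Finset β)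
    (r : α → β → Prop) [∀ x z, Decidable (r x z)] {s d : ℕ} (hs : s ≤ #B)
    (hd : ∀ x ∈ A, d ≤ #{z ∈ B | r x z}) :
    ∃ S ∈ B.powersetCard s, #A * d.choose s ≤ (#B).choose s * #{x ∈ A | ∀ z ∈ S, r x z} := by
  refine exists_le_of_sum_le (powersetCard_nonempty.2 hs) ?_
  have hcount (x : α) :
      #{S ∈ B.powersetCard s | ∀ z ∈ S, r x z} = (#{z ∈ B | r x z}).choose s := by
    rw [← card_powersetCard]
    congr 1
    ext S
    simp only [mem_filter, mem_powersetCard, subset_iff]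
    aesop
  calc ∑ _ ∈ B.powersetCard s, #A * d.choose s
      = (#B).choose s * ∑ _ ∈ A, d.choose s := by simp
    _ ≤ (#B).choose s * ∑ x ∈ A, #{S ∈ B.powersetCard s | ∀ z ∈ S, r x z} := by
        gcongr with x hx
        rw [hcount]
        exact Nat.choose_le_choose s (hd x hx)
    _ = ∑ S ∈ B.powersetCard s, (#B).choose s * #{x ∈ A | ∀ z ∈ S, r x z} := by
        simp only [card_filter, ← mul_sum]
        rw [sum_comm]

theorem exists_monochromatic_grid {T : Finset γ} (hT : T.Nonempty)
    (c : α → β → γ) {A : Finset α} {B : Finset β} {s m : ℕ}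
    (hc : ∀ x ∈ A, ∀ z ∈ B, c x z ∈ T) (hB : #B = #T * (2 * s))
    (hA : #T * (m * (2 * #T) ^ s) ≤ #A) :
    ∃ a, ∃ S ⊆ B, #S = s ∧ ∃ A' ⊆ A, #A' = m ∧ ∀ x ∈ A', ∀ z ∈ S, c x z = a := by
  classical
  have hpopular (x : α) (hx : x ∈ A) : ∃ a ∈ T, 2 * s ≤ #{z ∈ B | c x z = a} :=
    exists_le_card_fiber_of_mul_le_card_of_maps_to (hc x hx) hT hB.ge
  have : Nonempty γ := hT.to_type
  choose! F hFT hF using hpopular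
  obtain ⟨a, -, A₁, hA₁A, hA₁, hA₁a⟩ := exists_subset_card_eq_forall_eq hFT hT hA
  have hp : 0 < #T := hT.card_pos
  obtain ⟨S, hS, hcount⟩ := exists_mem_powersetCard_card_mul_choose_le A₁ B
    (fun x z => c x z = a) (s := s) (d := 2 * s) (by rw [hB]; nlinarith)
    (fun x hx => hA₁a x hx ▸ hF x (hA₁A hx))
  rw [mem_powersetCard] at hS
  have hm : m ≤ #{x ∈ A₁ | ∀ z ∈ S, c x z = a} := by
    have hpos : 0 < (2 * #T) ^ s * (2 * s).choose s :=
      Nat.mul_pos (by positivity) (Nat.choose_pos (by omega))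
    refine Nat.le_of_mul_le_mul_left ?_ hpos
    calc (2 * #T) ^ s * (2 * s).choose s * m = #A₁ * (2 * s).choose s := by rw [hA₁]; ring
      _ ≤ (#B).choose s * #{x ∈ A₁ | ∀ z ∈ S, c x z = a} := hcount
      _ ≤ _ := by
          rw [hB]
          gcongr
          exact Nat.choose_mul_two_mul_le _ _
  obtain ⟨A', hA'A₁, hA'⟩ := exists_subset_card_eq hm
  exact ⟨a, S, hS.1, hS.2, A', hA'A₁.trans ((filter_subset _ _).trans hA₁A), hA',
    fun x hx => (mem_filter.1 (hA'A₁ hx)).2⟩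

theorem exists_monochromatic_tripartite {δ : Type*} {T : Finset γ}
    (hT : T.Nonempty) (n : ℕ) {X : Finset α} {Y : Finset β} {Z : Finset δ}
    (cXY : α → β → γ) (cYZ : β → δ → γ) (cXZ : α → δ → γ)
    (hXY : ∀ x ∈ X, ∀ y ∈ Y, cXY x y ∈ T) (hYZ : ∀ y ∈ Y, ∀ z ∈ Z, cYZ y z ∈ T)
    (hXZ : ∀ x ∈ X, ∀ z ∈ Z, cXZ x z ∈ T) (hX : n * (2 * #T) ^ (3 * n + 3) ≤ #X)
    (hY : n * (2 * #T) ^ (3 * n + 3) ≤ #Y) (hZ : n * (2 * #T) ^ (3 * n + 3) ≤ #Z)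
    (g : γ × γ × γ → Bool) :
    ∃ col : Bool, ∃ I ⊆ X, ∃ J ⊆ Y, ∃ K ⊆ Z, #I = n ∧ #J = n ∧ #K = n ∧
      ∀ i ∈ I, ∀ j ∈ J, ∀ k ∈ K, g (cXY i j, cYZ j k, cXZ i k) = col := by
  set p := #T
  have hp : 1 ≤ p := hT.card_pos
  have hM (e : ℕ) (he : e ≤ 3 * n + 3) : n * (2 * p) ^ e ≤ n * (2 * p) ^ (3 * n + 3) := by
    gcongr; omega
  obtain ⟨Z₀, hZ₀Z, hZ₀⟩ := exists_subset_card_eq (s := Z) (n := p * (2 * (2 * n))) <| by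
    calc p * (2 * (2 * n)) = n * (2 * p) * 2 := by ring
      _ ≤ n * (2 * p) * (2 * p) := by gcongr; omega
      _ = n * (2 * p) ^ 2 := by ring
      _ ≤ #Z := (hM 2 (by omega)).trans hZ
  obtain ⟨a₁, K₁, hK₁Z₀, hK₁, X₁, hX₁X, hX₁, ha₁⟩ := exists_monochromatic_grid hT cXZ
    (m := p * (2 * n)) (fun x hx z hz => hXZ x hx z (hZ₀Z hz)) hZ₀ <| by
      calc p * (p * (2 * n) * (2 * p) ^ (2 * n)) = n * (2 * p) ^ (2 * n) * (2 * p) * p := by ring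
        _ ≤ n * (2 * p) ^ (2 * n) * (2 * p) * (2 * p) := by gcongr; omega
        _ = n * (2 * p) ^ (2 * n + 2) := by ring
        _ ≤ #X := (hM _ (by omega)).trans hX
  obtain ⟨a₂, I, hIX₁, hI, J₀, hJ₀Y, hJ₀, ha₂⟩ := exists_monochromatic_grid hT (fun y x => cXY x y)
    (m := p ^ (2 * n) * n) (fun y hy x hx => hXY x (hX₁X hx) y hy) hX₁ <| by
      calc p * (p ^ (2 * n) * n * (2 * p) ^ n)
          ≤ (2 * p) * ((2 * p) ^ (2 * n) * n * (2 * p) ^ n) := by gcongr <;> omega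
        _ = n * (2 * p) ^ (3 * n + 1) := by ring
        _ ≤ #Y := (hM _ (by omega)).trans hY
  obtain ⟨J, hJJ₀, hJ, d, hd⟩ := exists_subset_forall_eq_of_pow_mul_le_card hT cYZ K₁
    (fun y hy k hk => hYZ y (hJ₀Y hy) k (hZ₀Z (hK₁Z₀ hk))) (by rw [hK₁, hJ₀])
  obtain ⟨col, -, K, hKK₁, hK, hcol⟩ := exists_subset_card_eq_forall_eq (s := K₁) (t := univ)
    (n := n) (f := fun k => g (a₂, d k, a₁)) (fun _ _ => mem_univ _) univ_nonempty (by simp [hK₁])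
  refine ⟨col, I, hIX₁.trans hX₁X, J, hJJ₀.trans hJ₀Y, K, hKK₁.trans (hK₁Z₀.trans hZ₀Z),
    hI, hJ, hK, fun i hi j hj k hk => ?_⟩
  rw [ha₂ j (hJJ₀ hj) i hi, hd j hj k (hKK₁ hk), ha₁ i (hIX₁ hi) k (hKK₁ hk)]
  exact hcol k hk

theorem mul_pow_le_of_two_rpow_le {n p N : ℕ} (hn : 1 ≤ n) (hp : 2 ≤ p)
    (hN : (2 : ℝ) ^ (15 / Real.log 2 * n * Real.log p) ≤ N) :
    3 * (n * (2 * p) ^ (3 * n + 3)) ≤ N := by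
  have hpow : (2 : ℝ) ^ (15 / Real.log 2 * n * Real.log p) = (p ^ (15 * n) : ℕ) := by
    rw [Real.rpow_def_of_pos two_pos, Nat.cast_pow,
      ← Real.exp_log (by positivity : (0 : ℝ) < p ^ (15 * n)), Real.log_pow]
    have : Real.log 2 ≠ 0 := (Real.log_pos one_lt_two).ne'
    field_simp
    push_cast
    ring_nf
  have hnat : 3 * (n * (2 * p) ^ (3 * n + 3)) ≤ p ^ (15 * n) :=
    calc 3 * (n * (2 * p) ^ (3 * n + 3)) ≤ p ^ 2 * (p ^ n * (p ^ 2) ^ (3 * n + 3)) := by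
          gcongr
          · nlinarith
          · exact n.lt_two_pow_self.le.trans (Nat.pow_le_pow_left hp n)
          · nlinarith
      _ = p ^ (7 * n + 8) := by ring
      _ ≤ p ^ (15 * n) := Nat.pow_le_pow_right (by omega) (by omega)
  exact_mod_cast (Nat.cast_le.2 hnat).trans (hpow ▸ hN)

theorem eq_and_eq_and_eq_of_insert_eq {i j k a b c : ℕ} (hij : i < j) (hjk : j < k)
    (hab : a < b) (hbc : b < c) (h : ({i, j, k} : Finset ℕ) = {a, b, c}) :
    a = i ∧ b = j ∧ c = k := by
  have hx (x : ℕ) : x = i ∨ x = j ∨ x = k ↔ x = a ∨ x = b ∨ x = c := by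
    simpa using congrArg (x ∈ ·) h
  have := hx i; have := hx j; have := hx k; have := hx a; have := hx b; have := hx c
  omega

end PairConstruction

open PairConstruction

/-- There is an absolute constant `C > 0` such that for all `n ≥ 1`, `p ≥ 2`
and `N ≥ 2^{C n log p}`: for every `f` mapping the pairs of `{0,…,N−1}` into `[p] = {1,…,p}`
and every `g : [p]³ → {red, blue}` (`true` = red, `false` = blue), the pair-construction
coloring `χ {i,j,k} = g (f {i,j}, f {j,k}, f {i,k})` (for `i < j < k`) contains a
monochromatic copy of `K_{n,n,n}^{(3)}`, i.e. there are disjoint `n`-element sets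
`I, J, K ⊆ {0,…,N−1}` all of whose crossing triples get the same color. -/
theorem pair_construction_tripartite :
    ∃ C : ℝ, C > 0 ∧ ∀ n p N : ℕ, 1 ≤ n → 2 ≤ p →
      (2 : ℝ) ^ (C * n * Real.log p) ≤ (N : ℝ) →
      ∀ f : Finset ℕ → ℕ,
        (∀ e : Finset ℕ, e ⊆ Finset.range N → e.card = 2 → f e ∈ Finset.Icc 1 p) →
        ∀ g : ℕ × ℕ × ℕ → Bool,
          ∃ (col : Bool) (I J K : Finset ℕ),
            I ⊆ Finset.range N ∧ J ⊆ Finset.range N ∧ K ⊆ Finset.range N ∧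
            Disjoint I J ∧ Disjoint J K ∧ Disjoint I K ∧
            I.card = n ∧ J.card = n ∧ K.card = n ∧
            ∀ i ∈ I, ∀ j ∈ J, ∀ k ∈ K, ∀ a b c : ℕ,
              ({i, j, k} : Finset ℕ) = {a, b, c} → a < b → b < c →
              g (f {a, b}, f {b, c}, f {a, c}) = col := by
  -- `C = 15 / log 2` makes `2 ^ (C n log p) = p ^ (15 n)`.
  refine ⟨15 / Real.log 2, by positivity, fun n p N hn hp hN f hf g => ?_⟩
  set M := n * (2 * p) ^ (3 * n + 3)
  have h3M : 3 * M ≤ N := mul_pow_le_of_two_rpow_le hn hp hN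
  have hpair {x y : ℕ} (hxy : x < y) (hy : y < N) : f {x, y} ∈ Icc 1 p :=
    hf _ (fun t ht => by simp only [mem_insert, mem_singleton] at ht; rw [mem_range]; omega)
      (card_pair hxy.ne)
  obtain ⟨col, I, hI, J, hJ, K, hK, hIn, hJn, hKn, hmono⟩ :=
    exists_monochromatic_tripartite (T := Icc 1 p) (nonempty_Icc.2 (by omega)) n
      (X := Ico 0 M) (Y := Ico M (2 * M)) (Z := Ico (2 * M) (3 * M))
      (fun x y => f {x, y}) (fun y z => f {y, z}) (fun x z => f {x, z})
      (fun x hx y hy => by rw [mem_Ico] at hx hy; exact hpair (by omega) (by omega))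
      (fun y hy z hz => by rw [mem_Ico] at hy hz; exact hpair (by omega) (by omega))
      (fun x hx z hz => by rw [mem_Ico] at hx hz; exact hpair (by omega) (by omega))
      (by simp [M]) (by simp only [Nat.card_Icc, Nat.card_Ico, Nat.add_sub_cancel]; omega)
      (by simp only [Nat.card_Icc, Nat.card_Ico, Nat.add_sub_cancel]; omega) g
  simp only [subset_iff, mem_Ico] at hI hJ hK
  refine ⟨col, I, J, K, fun x hx => ?_, fun x hx => ?_, fun x hx => ?_, ?_, ?_, ?_,
    hIn, hJn, hKn, fun i hi j hj k hk a b c habc hab hbc => ?_⟩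
  · exact mem_range.2 (by have := hI hx; omega)
  · exact mem_range.2 (by have := hJ hx; omega)
  · exact mem_range.2 (by have := hK hx; omega)
  · exact disjoint_left.2 fun x hxI hxJ => by have := hI hxI; have := hJ hxJ; omega
  · exact disjoint_left.2 fun x hxJ hxK => by have := hJ hxJ; have := hK hxK; omega
  · exact disjoint_left.2 fun x hxI hxK => by have := hI hxI; have := hK hxK; omega
  · obtain ⟨rfl, rfl, rfl⟩ := eq_and_eq_and_eq_of_insert_eq
      (by have := hI hi; have := hJ hj; omega) (by have := hJ hj; have := hK hk; omega) hab hbc habc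
    exact hmono a hi b hj c hk
end

section
/- Let k ≥ 3 and let W be the 3-graph with vertex set {w, w_1, ..., w_k} (k+1 distinct vertices) and edges {w, w_i, w_{i+1}} for 1 ≤ i ≤ k−1 (the w-link of the path w_1 w_2 ⋯ w_k). Suppose a linear order < on V(W) and a labelling of ∂W by {1,2,3} form a valid 123-coloring of W, i.e., for every edge {u,v,w'} of W with u < v < w', the pair uv is labelled 1, vw' is labelled 2, and uw' is labelled 3. Then the sequence w_1, ..., w_k alternates with respect to <: either w_1 < w_2, w_2 > w_3, w_3 < w_4, ... or w_1 > w_2, w_2 < w_3, w_3 > w_4, .... -/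
/-!
In a valid 123-coloring the label of a pair `{x, y}` inside an edge `{x, y, z}` is determined by
where `z` lies relative to `x` and `y`: above both, below both, or between them. The consecutive
edges `{w, wᵢ, wᵢ₊₁}` and `{w, wᵢ₊₁, wᵢ₊₂}` share the pair `{w, wᵢ₊₁}`, so `wᵢ` and `wᵢ₊₂` lie on
the same side of it, which forces `wᵢ < wᵢ₊₁ ↔ wᵢ₊₂ < wᵢ₊₁`. Hence the comparisons of consecutive
`wᵢ` flip at every step.
-/

section
variable {V β : Type*} [DecidableEq V] [LinearOrder β]

def Respects123 (ord : V → β) (lab : Finset V → Fin 3) (e : Finset V) : Prop :=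
  ∀ u v x, e = {u, v, x} → ord u < ord v → ord v < ord x →
    lab {u, v} = 0 ∧ lab {v, x} = 1 ∧ lab {u, x} = 2

/-- The label `lab {x, y}` forced by a third vertex `z` (labels `0, 1, 2` stand for `1, 2, 3`). -/
def forcedLabel (x y z : β) : Fin 3 :=
  if x < z ∧ y < z then 0 else if z < x ∧ z < y then 1 else 2

theorem lt_iff_lt_of_forcedLabel_eq {x y z z' : β} (hz : z ≠ y) (hz' : z' ≠ y)
    (h : forcedLabel x y z = forcedLabel x y z') : z < y ↔ z' < y := by
  unfold forcedLabel at h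
  grind

theorem Respects123.lab_eq_forcedLabel {ord : V → β} {lab : Finset V → Fin 3} {w a b : V}
    (h : Respects123 ord lab {w, a, b}) (hwa : ord w ≠ ord a) (hwb : ord w ≠ ord b)
    (hab : ord a ≠ ord b) : lab {w, b} = forcedLabel (ord w) (ord b) (ord a) := by
  have hbw : ({b, w} : Finset V) = {w, b} := Finset.pair_comm b w
  rcases hwa.lt_or_gt with h1 | h1 <;> rcases hwb.lt_or_gt with h2 | h2 <;>
    rcases hab.lt_or_gt with h3 | h3
  · rw [(h w a b rfl h1 h3).2.2]; unfold forcedLabel; grind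
  · rw [(h w b a (by rw [Finset.pair_comm]) h2 h3).1]; unfold forcedLabel; grind
  · exact absurd (h1.trans h3) (lt_asymm h2)
  · rw [← hbw, (h b w a (by ext; simp; tauto) h2 h1).1]; unfold forcedLabel; grind
  · rw [(h a w b (by ext; simp; tauto) h1 h2).2.1]; unfold forcedLabel; grind
  · exact absurd (h1.trans h2) (lt_asymm h3)
  · rw [← hbw, (h a b w (by ext; simp; tauto) h3 h2).2.1]; unfold forcedLabel; grind
  · rw [← hbw, (h b a w (by ext; simp; tauto) h3 h1).2.2]; unfold forcedLabel; grind

theorem Respects123.lt_iff_lt_of_adjacent {ord : V → β} {lab : Finset V → Fin 3} {w a b c : V}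
    (hab : Respects123 ord lab {w, a, b}) (hbc : Respects123 ord lab {w, b, c})
    (hwa : ord w ≠ ord a) (hwb : ord w ≠ ord b) (hwc : ord w ≠ ord c)
    (ha : ord a ≠ ord b) (hc : ord c ≠ ord b) : ord a < ord b ↔ ord c < ord b := by
  have hcb : Respects123 ord lab {w, c, b} := by rwa [Finset.pair_comm c b]
  refine lt_iff_lt_of_forcedLabel_eq (x := ord w) ha hc ?_
  rw [← hab.lab_eq_forcedLabel hwa hwb ha, ← hcb.lab_eq_forcedLabel hwc hwb hc]

theorem zigzag_lt_succ_iff {s : ℕ → β} {k : ℕ}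
    (hne : ∀ i, 1 ≤ i → i < k → s i ≠ s (i + 1))
    (hzig : ∀ i, 1 ≤ i → i + 1 < k → (s i < s (i + 1) ↔ s (i + 2) < s (i + 1))) :
    ∀ i, 1 ≤ i → i < k → (s i < s (i + 1) ↔ (Odd i ↔ s 1 < s 2)) := by
  intro i hi hik
  induction i, hi using Nat.le_induction with
  | base => simp
  | succ i hi ih =>
    have hflip : s (i + 1) < s (i + 2) ↔ ¬ s (i + 2) < s (i + 1) :=
      ⟨lt_asymm, fun h => (hne (i + 1) (by omega) hik).lt_of_le (not_lt.mp h)⟩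
    rw [hflip, ← hzig i hi hik, ih (by omega), Nat.odd_add_one]
    tauto

theorem zigzag_alternates {s : ℕ → β} {k : ℕ}
    (hne : ∀ i, 1 ≤ i → i < k → s i ≠ s (i + 1))
    (hzig : ∀ i, 1 ≤ i → i + 1 < k → (s i < s (i + 1) ↔ s (i + 2) < s (i + 1))) :
    (∀ i, 1 ≤ i → i < k → (Odd i → s i < s (i + 1)) ∧ (Even i → s (i + 1) < s i)) ∨
    (∀ i, 1 ≤ i → i < k → (Odd i → s (i + 1) < s i) ∧ (Even i → s i < s (i + 1))) := by
  have key := zigzag_lt_succ_iff hne hzig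
  by_cases h12 : s 1 < s 2
  · exact Or.inl fun i hi hik => by grind
  · exact Or.inr fun i hi hik => by grind

end

theorem link_path_alternates_general (k : ℕ) (w : ℕ) (ws : ℕ → ℕ)
    (hinj : Set.InjOn ws (Set.Icc 1 k)) (hw : ∀ i, 1 ≤ i → i ≤ k → ws i ≠ w)
    (ord : ℕ → ℕ) (hord : Set.InjOn ord (insert w (ws '' Set.Icc 1 k)))
    (lab : Finset ℕ → Fin 3)
    (h123 : ∀ i, 1 ≤ i → i < k → ∀ u v x : ℕ,
      ({w, ws i, ws (i + 1)} : Finset ℕ) = {u, v, x} →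
      ord u < ord v → ord v < ord x →
      lab {u, v} = 0 ∧ lab {v, x} = 1 ∧ lab {u, x} = 2) :
    (∀ i, 1 ≤ i → i < k →
      (Odd i → ord (ws i) < ord (ws (i + 1))) ∧
      (Even i → ord (ws (i + 1)) < ord (ws i))) ∨
    (∀ i, 1 ≤ i → i < k →
      (Odd i → ord (ws (i + 1)) < ord (ws i)) ∧
      (Even i → ord (ws i) < ord (ws (i + 1)))) := by
  have hws : ∀ i ∈ Set.Icc 1 k, ws i ∈ insert w (ws '' Set.Icc 1 k) :=
    fun i hi => Set.mem_insert_of_mem _ (Set.mem_image_of_mem ws hi)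
  have hs : Set.InjOn (ord ∘ ws) (Set.Icc 1 k) := hord.comp hinj hws
  have hwne (i) (hi : 1 ≤ i) (hik : i ≤ k) : ord w ≠ ord (ws i) :=
    hord.ne (Set.mem_insert _ _) (hws i ⟨hi, hik⟩) (hw i hi hik).symm
  refine zigzag_alternates (s := ord ∘ ws)
    (fun i hi hik => hs.ne ⟨hi, hik.le⟩ ⟨by omega, hik⟩ (by omega)) fun i hi hik => ?_
  have edge (i) (hi : 1 ≤ i) (hik : i < k) : Respects123 ord lab {w, ws i, ws (i + 1)} :=
    h123 i hi hik
  exact (edge i hi (by omega)).lt_iff_lt_of_adjacent (edge (i + 1) (by omega) hik)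
    (hwne i hi (by omega)) (hwne (i + 1) (by omega) (by omega))
    (hwne (i + 2) (by omega) (by omega))
    (hs.ne ⟨hi, by omega⟩ ⟨by omega, by omega⟩ (by omega))
    (hs.ne ⟨by omega, by omega⟩ ⟨by omega, by omega⟩ (by omega))

/-- Let `W` be the `w`-link of the path `w₁ w₂ ⋯ w_k` (`k ≥ 3`), i.e. the
3-graph with (distinct) vertices `w, w₁, …, w_k` and edges `{w, wᵢ, wᵢ₊₁}` for `1 ≤ i ≤ k−1`.
Suppose a linear order (given by a function `ord`, injective on the vertex set) and a
labelling `lab` of the shadow by `{1,2,3}` (here `Fin 3`, with `0,1,2` standing for `1,2,3`)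
form a valid 123-coloring: for every edge `{u,v,x}` with `u < v < x`, `uv` is labelled `1`,
`vx` is labelled `2` and `ux` is labelled `3`. Then `w₁, …, w_k` alternates in the order:
either `w₁ < w₂ > w₃ < w₄ > ⋯` or `w₁ > w₂ < w₃ > w₄ < ⋯`. -/
theorem link_path_alternates (k : ℕ) (hk : 3 ≤ k) (w : ℕ) (ws : ℕ → ℕ)
    (hinj : Set.InjOn ws (Set.Icc 1 k)) (hw : ∀ i, 1 ≤ i → i ≤ k → ws i ≠ w)
    (ord : ℕ → ℕ) (hord : Set.InjOn ord (insert w (ws '' Set.Icc 1 k)))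
    (lab : Finset ℕ → Fin 3)
    (h123 : ∀ i, 1 ≤ i → i < k → ∀ u v x : ℕ,
      ({w, ws i, ws (i + 1)} : Finset ℕ) = {u, v, x} →
      ord u < ord v → ord v < ord x →
      lab {u, v} = 0 ∧ lab {v, x} = 1 ∧ lab {u, x} = 2) :
    (∀ i, 1 ≤ i → i < k →
      (Odd i → ord (ws i) < ord (ws (i + 1))) ∧
      (Even i → ord (ws (i + 1)) < ord (ws i))) ∨
    (∀ i, 1 ≤ i → i < k →
      (Odd i → ord (ws (i + 1)) < ord (ws i)) ∧
      (Even i → ord (ws i) < ord (ws (i + 1)))) :=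
  link_path_alternates_general k w ws hinj hw ord hord lab h123
end
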